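/- arXiv:math/0608622 — 3 statements merged into one kernel-verified Lean document; each statement's English description precedes it below -/
import Mathlib

section
/- Let n be a positive integer and let π ∈ NC(n). For every integer p satisfying |π|_out ≤ p ≤ |π|, the number of partitions ρ ∈ NC(n) such that ρ ≫ π and |ρ| = p equals the binomial coefficient C(|π| − |π|_out, p − |π|_out). -/
open Finset

attribute [local instance] Classical.propDecidable

open scoped ComplexOrder

namespace BBP

/-- Partitions of `{1,…,m}` modeled as `Finpartition`s of `univ : Finset (Fin m)`. -/
abbrev FP (m : ℕ) := Finpartition (Finset.univ : Finset (Fin m))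

noncomputable instance (m : ℕ) : Fintype (FP m) :=
  Fintype.ofInjective (fun π : FP m => π.parts) fun a b h => by
    cases a; cases b; simpa using h

/-- `x` is the minimum of the set `C`. -/
def IsMinOf {m : ℕ} (x : Fin m) (C : Finset (Fin m)) : Prop :=
  x ∈ C ∧ ∀ y ∈ C, x ≤ y

/-- `x` is the maximum of the set `C`. -/
def IsMaxOf {m : ℕ} (x : Fin m) (C : Finset (Fin m)) : Prop :=
  x ∈ C ∧ ∀ y ∈ C, y ≤ x

/-- `a` and `b` lie in one block of `π`. -/
def SameBlock {m : ℕ} (π : FP m) (a b : Fin m) : Prop :=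
  ∃ B ∈ π.parts, a ∈ B ∧ b ∈ B

/-- `π` is non-crossing: if `i<j<k<l`, `i,k` in one block and `j,l` in one block,
then all of them are in one block. -/
def IsNC {m : ℕ} (π : FP m) : Prop :=
  ∀ i j k l : Fin m, i < j → j < k → k < l →
    SameBlock π i k → SameBlock π j l → SameBlock π i j

/-- `A` embraces `B` : `min A ≤ min B` and `max B ≤ max A`. -/
def Embraces {m : ℕ} (A B : Finset (Fin m)) : Prop :=
  ∃ a₁ a₂ b₁ b₂ : Fin m, IsMinOf a₁ A ∧ IsMaxOf a₂ A ∧ IsMinOf b₁ B ∧ IsMaxOf b₂ B ∧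
    a₁ ≤ b₁ ∧ b₂ ≤ a₂

/-- `B` strictly embraces `A` : `min B < min A` and `max A < max B`. -/
def StrictlyEmbraces {m : ℕ} (B A : Finset (Fin m)) : Prop :=
  ∃ b₁ b₂ a₁ a₂ : Fin m, IsMinOf b₁ B ∧ IsMaxOf b₂ B ∧ IsMinOf a₁ A ∧ IsMaxOf a₂ A ∧
    b₁ < a₁ ∧ a₂ < b₂

/-- `A` is an outer block of `π`. -/
def IsOuter {m : ℕ} (π : FP m) (A : Finset (Fin m)) : Prop :=
  A ∈ π.parts ∧ ¬ ∃ B ∈ π.parts, StrictlyEmbraces B A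

/-- The number `|π|_out` of outer blocks of `π`. -/
noncomputable def numOuter {m : ℕ} (π : FP m) : ℕ :=
  (π.parts.filter fun A => IsOuter π A).card

/-- Reversed refinement order: every block of `ρ` is a union of blocks of `π`. -/
def Refines {m : ℕ} (π ρ : FP m) : Prop :=
  ∀ B ∈ π.parts, ∃ C ∈ ρ.parts, B ⊆ C

/-- The partial order `π ≪ ρ`. -/
def Ll {m : ℕ} (π ρ : FP m) : Prop :=
  Refines π ρ ∧
    ∀ C ∈ ρ.parts, ∃ B ∈ π.parts, ∃ x y : Fin m,
      IsMinOf x C ∧ IsMaxOf y C ∧ x ∈ B ∧ y ∈ B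

/-- The partition `1ₙ` of `{1,…,n+1}` with a single block. -/
noncomputable def fullPart (n : ℕ) : FP (n+1) :=
  Finpartition.indiscrete (by simpa using (Finset.univ_nonempty (α := Fin (n+1))).ne_empty)

/-- `π` is an interval partition. -/
def IsIntervalPartition {m : ℕ} (π : FP m) : Prop :=
  ∀ B ∈ π.parts, ∀ x ∈ B, ∀ z ∈ B, ∀ y : Fin m, x ≤ y → y ≤ z → y ∈ B

/-- `σ` is the permutation associated to `π` : on each block `{b₁ < ⋯ < b_q}` it is the
cycle `b₁ ↦ b₂ ↦ ⋯ ↦ b_q ↦ b₁`. -/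
def IsAssocPerm {m : ℕ} (π : FP m) (σ : Equiv.Perm (Fin m)) : Prop :=
  ∀ B ∈ π.parts, ∀ b ∈ B, σ b ∈ B ∧
    ((b < σ b ∧ ∀ x ∈ B, b < x → σ b ≤ x) ∨ (IsMaxOf b B ∧ IsMinOf (σ b) B))

/-- `κ` is the Kreweras complement of `π`, characterized by `P_κ = P_π⁻¹ ∘ P_{1ₙ}`,
where `P_{1ₙ}` is the cycle `1 ↦ 2 ↦ ⋯ ↦ n ↦ 1` (i.e. `finRotate`). -/
def IsKrewerasPair {m : ℕ} (π κ : FP m) : Prop :=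
  ∃ σπ σκ : Equiv.Perm (Fin m), IsAssocPerm π σπ ∧ IsAssocPerm κ σκ ∧
    σκ = σπ⁻¹ * finRotate m

/-- the element `2a-1` of `{1,…,2n}`, in `Fin (2n)` (0-indexed). -/
def oddEmb {n : ℕ} (a : Fin n) : Fin (2*n) := ⟨2*a.val, by have := a.isLt; omega⟩

/-- the element `2a` of `{1,…,2n}`, in `Fin (2n)` (0-indexed). -/
def evenEmb {n : ℕ} (a : Fin n) : Fin (2*n) := ⟨2*a.val + 1, by have := a.isLt; omega⟩

/-- `θ = π^(odd) ∪ ρ^(even)` : the blocks of `θ` are the sets `{2a-1 : a ∈ A}` for `A`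
a block of `π` and the sets `{2b : b ∈ B}` for `B` a block of `ρ`. -/
def IsOddEvenJoin {n : ℕ} (π ρ : FP n) (θ : FP (2*n)) : Prop :=
  θ.parts = π.parts.image (fun B => B.image oddEmb) ∪
    ρ.parts.image (fun B => B.image evenEmb)

/-- a block consisting of odd elements of `{1,…,2n}` (even 0-indexed values). -/
def OddBlock {m : ℕ} (B : Finset (Fin m)) : Prop := ∀ x ∈ B, x.val % 2 = 0

/-- a block consisting of even elements of `{1,…,2n}` (odd 0-indexed values). -/
def EvenBlock {m : ℕ} (B : Finset (Fin m)) : Prop := ∀ x ∈ B, x.val % 2 = 1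

/-- every block of `θ` is contained in the odds or in the evens. -/
def ParityPreserving {m : ℕ} (θ : FP m) : Prop :=
  ∀ B ∈ θ.parts, OddBlock B ∨ EvenBlock B

def OppositeParity {m : ℕ} (A B : Finset (Fin m)) : Prop :=
  (OddBlock A ∧ EvenBlock B) ∨ (EvenBlock A ∧ OddBlock B)

def SameParity {m : ℕ} (A B : Finset (Fin m)) : Prop :=
  (OddBlock A ∧ OddBlock B) ∨ (EvenBlock A ∧ EvenBlock B)

/-- `P = Parent_θ(A)` : the unique block `P ≠ A` of `θ` embracing `A` such that every
block `A' ≠ A` of `θ` embracing `A` also embraces `P`. -/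
def IsParent {m : ℕ} (θ : FP m) (A P : Finset (Fin m)) : Prop :=
  P ∈ θ.parts ∧ P ≠ A ∧ Embraces P A ∧
    ∀ A' ∈ θ.parts, A' ≠ A → Embraces A' A → Embraces A' P

/-- `θ` has exactly two outer blocks. -/
def ExactlyTwoOuterBlocks {m : ℕ} (θ : FP m) : Prop :=
  ∃ M ∈ θ.parts, ∃ N ∈ θ.parts, M ≠ N ∧ IsOuter θ M ∧ IsOuter θ N ∧
    ∀ A ∈ θ.parts, IsOuter θ A → A = M ∨ A = N

/-- A series in `ℂ₀⟨⟨z₁,…,z_k⟩⟩`, given by its family of coefficients: `f n w` is the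
coefficient of `z_{w 0} z_{w 1} ⋯ z_{w n}` (a word of length `n+1 ≥ 1`). -/
abbrev NCSeries (k : ℕ) := (n : ℕ) → (Fin (n+1) → Fin k) → ℂ

/-- The coefficient `Cf_{w|B}(f)` of the restriction of the word `w` to the set `B`,
listing the elements of `B` in increasing order.  (Equals `1` for `B = ∅`.) -/
noncomputable def partCoeff {k m : ℕ} (f : NCSeries k) (w : Fin (m+1) → Fin k)
    (B : Finset (Fin (m+1))) : ℂ :=
  if h : B.Nonempty then
    f (B.card - 1) (fun j =>
      w ((B.orderIsoOfFin (Nat.succ_pred_eq_of_pos (Finset.card_pos.mpr h)).symm j).1))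
  else 1

/-- The generalized coefficient `Cf_{w;π}(f) = ∏_{B block of π} Cf_{w|B}(f)`. -/
noncomputable def genCoeff {k m : ℕ} (f : NCSeries k) (w : Fin (m+1) → Fin k)
    (π : FP (m+1)) : ℂ :=
  ∏ B ∈ π.parts, partCoeff f w B

/-- Linear functionals on `ℂ⟨X₁,…,X_k⟩`. -/
abbrev Dist (k : ℕ) := FreeAlgebra ℂ (Fin k) →ₗ[ℂ] ℂ

/-- `μ ∈ D_alg(k)` : `μ` is normalized by `μ(1) = 1`. -/
def IsDalg {k : ℕ} (μ : Dist k) : Prop := μ 1 = 1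

/-- The moment series `M_μ`, with `(momentSeries μ) n w = μ (X_{w 0} ⋯ X_{w n})`. -/
noncomputable def momentSeries {k : ℕ} (μ : Dist k) : NCSeries k :=
  fun _ w => μ ((List.ofFn fun j => FreeAlgebra.ι ℂ (w j)).prod)

/-- `f = R_μ` : the moments of `μ` are obtained from `f` by summation over all
non-crossing partitions. -/
def IsRTransform {k : ℕ} (μ : Dist k) (f : NCSeries k) : Prop :=
  ∀ (n : ℕ) (w : Fin (n+1) → Fin k),
    momentSeries μ n w = ∑ π : FP (n+1), if IsNC π then genCoeff f w π else 0

/-- `g = η_μ` : the moments of `μ` are obtained from `g` by summation over all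
interval partitions. -/
def IsEtaSeries {k : ℕ} (μ : Dist k) (g : NCSeries k) : Prop :=
  ∀ (n : ℕ) (w : Fin (n+1) → Fin k),
    momentSeries μ n w = ∑ π : FP (n+1), if IsIntervalPartition π then genCoeff g w π else 0

/-- `μ ∈ D_c(k)` : `μ` is the joint distribution of a `k`-tuple of selfadjoint elements
with respect to a state on a unital C*-algebra. -/
def IsDc {k : ℕ} (μ : Dist k) : Prop :=
  IsDalg μ ∧
  ∃ (A : Type) (_ : NormedRing A) (_ : StarRing A) (_ : CStarRing A)
    (_ : NormedAlgebra ℂ A) (_ : StarModule ℂ A) (_ : CompleteSpace A)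
    (φ : A →ₗ[ℂ] ℂ) (x : Fin k → A),
      φ 1 = 1 ∧ (∀ a : A, 0 ≤ φ (star a * a)) ∧ (∀ i, IsSelfAdjoint (x i)) ∧
      ∀ (n : ℕ) (w : Fin (n+1) → Fin k),
        momentSeries μ n w = φ ((List.ofFn fun j => x (w j)).prod)

/-- convergence in moments. -/
def ConvInMoments {k : ℕ} (μseq : ℕ → Dist k) (μ : Dist k) : Prop :=
  ∀ P : FreeAlgebra ℂ (Fin k),
    Filter.Tendsto (fun N => μseq N P) Filter.atTop (nhds (μ P))

/-- coefficientwise convergence of series. -/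
def ConvCoeffwise {k : ℕ} (fseq : ℕ → NCSeries k) (f : NCSeries k) : Prop :=
  ∀ (n : ℕ) (w : Fin (n+1) → Fin k),
    Filter.Tendsto (fun N => fseq N n w) Filter.atTop (nhds (f n w))

/-- `ν` is the `p`-fold free additive convolution `μ ⊞ ⋯ ⊞ μ`, i.e. `R_ν = p · R_μ`. -/
def IsNFoldFree {k : ℕ} (p : ℕ) (μ ν : Dist k) : Prop :=
  ∃ f : NCSeries k, IsRTransform μ f ∧ IsRTransform ν (fun n w => (p : ℂ) * f n w)

/-- `ν` is the `p`-fold Boolean convolution `μ ⊎ ⋯ ⊎ μ`, i.e. `η_ν = p · η_μ`. -/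
def IsNFoldBool {k : ℕ} (p : ℕ) (μ ν : Dist k) : Prop :=
  ∃ g : NCSeries k, IsEtaSeries μ g ∧ IsEtaSeries ν (fun n w => (p : ℂ) * g n w)

/-- `ν = 𝔹(μ)` : the Boolean Bercovici–Pata bijection, `R_{𝔹(μ)} = η_μ`. -/
def IsBP {k : ℕ} (μ ν : Dist k) : Prop :=
  ∃ f : NCSeries k, IsEtaSeries μ f ∧ IsRTransform ν f

/-- `μ ∈ D_c(k)` is infinitely divisible with respect to `⊞`. -/
def IsInfDiv {k : ℕ} (μ : Dist k) : Prop :=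
  IsDc μ ∧ ∀ N : ℕ, 0 < N → ∃ ν : Dist k, IsDc ν ∧ IsNFoldFree N ν μ

/-- `g = Reta(f)`, i.e. there is `μ ∈ D_alg(k)` with `f = R_μ` and `g = η_μ`. -/
def RetaRel {k : ℕ} (f g : NCSeries k) : Prop :=
  ∃ μ : Dist k, IsDalg μ ∧ IsRTransform μ f ∧ IsEtaSeries μ g

/-! In a non-crossing partition the spans of two blocks are disjoint or strictly nested, so
the blocks enclosing a given block form a chain. If `ρ ≫ π`, every block of `ρ` contains a
block of `π` spanning it, and the other blocks of `π` inside it — the displaced ones — are inner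
blocks of `π`; there are `|π| - |ρ|` of them. Conversely, any set `S` of inner blocks of `π`
determines `ρ` by merging each block into its anchor, the innermost block outside `S` among
itself and its enclosing blocks. These two maps are mutually inverse, so the partitions counted
correspond to the `(|π| - p)`-subsets of the `|π| - |π|_out` inner blocks. -/

section Span

variable {m : ℕ}

/-- The value of `min B`, with junk value `0` for `B = ∅`. -/
noncomputable def minVal (B : Finset (Fin m)) : ℕ :=
  if h : B.Nonempty then B.min' h else 0

/-- The value of `max B`, with junk value `0` for `B = ∅`. -/
noncomputable def maxVal (B : Finset (Fin m)) : ℕ :=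
  if h : B.Nonempty then B.max' h else 0

variable {A B C : Finset (Fin m)} {x : Fin m}

lemma exists_val_eq_minVal (h : B.Nonempty) : ∃ x ∈ B, (x : ℕ) = minVal B :=
  ⟨B.min' h, B.min'_mem h, by rw [minVal, dif_pos h]⟩

lemma exists_val_eq_maxVal (h : B.Nonempty) : ∃ x ∈ B, (x : ℕ) = maxVal B :=
  ⟨B.max' h, B.max'_mem h, by rw [maxVal, dif_pos h]⟩

lemma minVal_le (hx : x ∈ B) : minVal B ≤ x := by
  rw [minVal, dif_pos ⟨x, hx⟩]
  exact B.min'_le x hx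

lemma le_maxVal (hx : x ∈ B) : (x : ℕ) ≤ maxVal B := by
  rw [maxVal, dif_pos ⟨x, hx⟩]
  exact B.le_max' x hx

lemma minVal_le_maxVal (h : B.Nonempty) : minVal B ≤ maxVal B :=
  (minVal_le h.choose_spec).trans (le_maxVal h.choose_spec)

lemma minVal_le_minVal_of_subset (hBC : B ⊆ C) (h : B.Nonempty) : minVal C ≤ minVal B := by
  obtain ⟨x, hx, hxv⟩ := exists_val_eq_minVal h
  exact hxv ▸ minVal_le (hBC hx)

lemma maxVal_le_maxVal_of_subset (hBC : B ⊆ C) (h : B.Nonempty) : maxVal B ≤ maxVal C := by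
  obtain ⟨x, hx, hxv⟩ := exists_val_eq_maxVal h
  exact hxv ▸ le_maxVal (hBC hx)

lemma isMinOf_iff : IsMinOf x B ↔ x ∈ B ∧ (x : ℕ) = minVal B := by
  refine ⟨fun ⟨hx, hle⟩ => ⟨hx, le_antisymm ?_ (minVal_le hx)⟩, fun ⟨hx, hv⟩ => ⟨hx, ?_⟩⟩
  · obtain ⟨y, hy, hyv⟩ := exists_val_eq_minVal ⟨x, hx⟩
    exact hyv ▸ hle y hy
  · intro y hy
    have := minVal_le hy
    omega

lemma isMaxOf_iff : IsMaxOf x B ↔ x ∈ B ∧ (x : ℕ) = maxVal B := by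
  refine ⟨fun ⟨hx, hle⟩ => ⟨hx, le_antisymm (le_maxVal hx) ?_⟩, fun ⟨hx, hv⟩ => ⟨hx, ?_⟩⟩
  · obtain ⟨y, hy, hyv⟩ := exists_val_eq_maxVal ⟨x, hx⟩
    exact hyv ▸ hle y hy
  · intro y hy
    have := le_maxVal hy
    omega

def Encloses (A B : Finset (Fin m)) : Prop := minVal A < minVal B ∧ maxVal B < maxVal A

lemma Encloses.trans (hAB : Encloses A B) (hBC : Encloses B C) : Encloses A C :=
  ⟨hAB.1.trans hBC.1, hBC.2.trans hAB.2⟩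

lemma strictlyEmbraces_iff_encloses (hA : A.Nonempty) (hB : B.Nonempty) :
    StrictlyEmbraces B A ↔ Encloses B A := by
  constructor
  · rintro ⟨b₁, b₂, a₁, a₂, hb₁, hb₂, ha₁, ha₂, h₁, h₂⟩
    rw [isMinOf_iff] at hb₁ ha₁
    rw [isMaxOf_iff] at hb₂ ha₂
    exact ⟨by omega, by omega⟩
  · rintro ⟨h₁, h₂⟩
    obtain ⟨b₁, hb₁, hb₁v⟩ := exists_val_eq_minVal hB
    obtain ⟨b₂, hb₂, hb₂v⟩ := exists_val_eq_maxVal hB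
    obtain ⟨a₁, ha₁, ha₁v⟩ := exists_val_eq_minVal hA
    obtain ⟨a₂, ha₂, ha₂v⟩ := exists_val_eq_maxVal hA
    exact ⟨b₁, b₂, a₁, a₂, isMinOf_iff.2 ⟨hb₁, hb₁v⟩, isMaxOf_iff.2 ⟨hb₂, hb₂v⟩,
      isMinOf_iff.2 ⟨ha₁, ha₁v⟩, isMaxOf_iff.2 ⟨ha₂, ha₂v⟩, by omega, by omega⟩

end Span

section Partition

variable {m : ℕ} {θ : FP m} {t u : Finset (Fin m)} {x y : Fin m}

lemma part_mem_parts (θ : FP m) (x : Fin m) : θ.part x ∈ θ.parts :=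
  θ.part_mem.2 (mem_univ x)

lemma self_mem_part (θ : FP m) (x : Fin m) : x ∈ θ.part x :=
  θ.mem_part (mem_univ x)

lemma sameBlock_iff : SameBlock θ x y ↔ θ.part x = θ.part y := by
  constructor
  · rintro ⟨W, hW, hx, hy⟩
    rw [θ.part_eq_of_mem hW hx, θ.part_eq_of_mem hW hy]
  · intro h
    exact ⟨θ.part x, part_mem_parts θ x, self_mem_part θ x, h ▸ self_mem_part θ y⟩

lemma eq_of_part_eq {θ' : FP m} (h : ∀ x, θ.part x = θ'.part x) : θ = θ' := by
  have key : ∀ (θ : FP m), θ.parts = univ.image θ.part := fun θ => by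
    ext B
    refine ⟨fun hB => ?_, fun hB => ?_⟩
    · obtain ⟨x, hx⟩ := θ.nonempty_of_mem_parts hB
      exact mem_image.2 ⟨x, mem_univ x, θ.part_eq_of_mem hB hx⟩
    · obtain ⟨x, -, rfl⟩ := mem_image.1 hB
      exact part_mem_parts θ x
  exact Finpartition.ext (by rw [key θ, key θ', funext h])

lemma val_ne_of_ne (ht : t ∈ θ.parts) (hu : u ∈ θ.parts) (htu : t ≠ u) (hx : x ∈ t)
    (hy : y ∈ u) : (x : ℕ) ≠ y := fun h =>
  htu (θ.eq_of_mem_parts ht hu hx (Fin.ext h ▸ hy))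

lemma eq_of_minVal_eq (ht : t ∈ θ.parts) (hu : u ∈ θ.parts) (h : minVal t = minVal u) :
    t = u := by
  by_contra htu
  obtain ⟨x, hx, hxv⟩ := exists_val_eq_minVal (θ.nonempty_of_mem_parts ht)
  obtain ⟨y, hy, hyv⟩ := exists_val_eq_minVal (θ.nonempty_of_mem_parts hu)
  exact val_ne_of_ne ht hu htu hx hy (by omega)

lemma eq_of_maxVal_eq (ht : t ∈ θ.parts) (hu : u ∈ θ.parts) (h : maxVal t = maxVal u) :
    t = u := by
  by_contra htu
  obtain ⟨x, hx, hxv⟩ := exists_val_eq_maxVal (θ.nonempty_of_mem_parts ht)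
  obtain ⟨y, hy, hyv⟩ := exists_val_eq_maxVal (θ.nonempty_of_mem_parts hu)
  exact val_ne_of_ne ht hu htu hx hy (by omega)

lemma encloses_of_subset_span {B C D : Finset (Fin m)} (hB : B ∈ θ.parts) (hD : D ∈ θ.parts)
    (hBD : B ≠ D) (hBC : B ⊆ C) (hmin : minVal D = minVal C) (hmax : maxVal D = maxVal C) :
    Encloses D B := by
  have hBne := θ.nonempty_of_mem_parts hB
  have h₁ := minVal_le_minVal_of_subset hBC hBne
  have h₂ := maxVal_le_maxVal_of_subset hBC hBne
  have h₃ : minVal B ≠ minVal D := fun h => hBD (eq_of_minVal_eq hB hD h)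
  have h₄ : maxVal B ≠ maxVal D := fun h => hBD (eq_of_maxVal_eq hB hD h)
  exact ⟨by omega, by omega⟩

end Partition

section NonCrossing

variable {m : ℕ} {θ : FP m} (hθ : IsNC θ) {t u : Finset (Fin m)}
include hθ

lemma eq_of_interleaved (ht : t ∈ θ.parts) (hu : u ∈ θ.parts) {a b c d : Fin m}
    (ha : a ∈ t) (hc : c ∈ t) (hb : b ∈ u) (hd : d ∈ u) (hab : a < b) (hbc : b < c)
    (hcd : c < d) : t = u := by
  obtain ⟨W, hW, haW, hbW⟩ := hθ a b c d hab hbc hcd ⟨t, ht, ha, hc⟩ ⟨u, hu, hb, hd⟩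
  exact (θ.eq_of_mem_parts ht hW ha haW).trans (θ.eq_of_mem_parts hW hu hbW hb)

lemma encloses_of_mem_span (ht : t ∈ θ.parts) (hu : u ∈ θ.parts) (htu : t ≠ u) {x : Fin m}
    (hx : x ∈ t) (h₁ : minVal u < x) (h₂ : x < maxVal u) : Encloses u t := by
  obtain ⟨a, ha, hav⟩ := exists_val_eq_minVal (θ.nonempty_of_mem_parts hu)
  obtain ⟨b, hb, hbv⟩ := exists_val_eq_maxVal (θ.nonempty_of_mem_parts hu)
  obtain ⟨c, hc, hcv⟩ := exists_val_eq_minVal (θ.nonempty_of_mem_parts ht)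
  obtain ⟨d, hd, hdv⟩ := exists_val_eq_maxVal (θ.nonempty_of_mem_parts ht)
  have hca := val_ne_of_ne ht hu htu hc ha
  have hdb := val_ne_of_ne ht hu htu hd hb
  have := minVal_le hx
  have := le_maxVal hx
  constructor
  · by_contra
    exact htu (eq_of_interleaved hθ ht hu hc hx ha hb (by omega) (by omega) (by omega))
  · by_contra
    exact htu.symm (eq_of_interleaved hθ hu ht ha hb hx hd (by omega) (by omega) (by omega))

lemma disjoint_or_encloses (ht : t ∈ θ.parts) (hu : u ∈ θ.parts) (htu : t ≠ u) :
    maxVal t < minVal u ∨ maxVal u < minVal t ∨ Encloses t u ∨ Encloses u t := by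
  obtain ⟨a, ha, hav⟩ := exists_val_eq_minVal (θ.nonempty_of_mem_parts hu)
  obtain ⟨b, hb, hbv⟩ := exists_val_eq_maxVal (θ.nonempty_of_mem_parts hu)
  obtain ⟨c, hc, hcv⟩ := exists_val_eq_minVal (θ.nonempty_of_mem_parts ht)
  obtain ⟨d, hd, hdv⟩ := exists_val_eq_maxVal (θ.nonempty_of_mem_parts ht)
  have := val_ne_of_ne ht hu htu hc ha
  have := val_ne_of_ne ht hu htu hd ha
  have := val_ne_of_ne ht hu htu hc hb
  have := minVal_le_maxVal (θ.nonempty_of_mem_parts ht)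
  have := minVal_le_maxVal (θ.nonempty_of_mem_parts hu)
  by_cases h₁ : maxVal t < minVal u
  · exact Or.inl h₁
  by_cases h₂ : maxVal u < minVal t
  · exact Or.inr (Or.inl h₂)
  by_cases h₃ : minVal t < minVal u
  · exact Or.inr (Or.inr (Or.inl (encloses_of_mem_span hθ hu ht htu.symm ha (by omega) (by omega))))
  · exact Or.inr (Or.inr (Or.inr (encloses_of_mem_span hθ ht hu htu hc (by omega) (by omega))))

lemma eq_or_encloses_of_encloses {B : Finset (Fin m)} (ht : t ∈ θ.parts) (hu : u ∈ θ.parts)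
    (hB : B.Nonempty) (htB : Encloses t B) (huB : Encloses u B) :
    t = u ∨ Encloses t u ∨ Encloses u t := by
  by_cases htu : t = u
  · exact Or.inl htu
  have := minVal_le_maxVal hB
  rcases disjoint_or_encloses hθ ht hu htu with h | h | h | h
  · exact absurd h (by obtain ⟨_, _⟩ := htB; obtain ⟨_, _⟩ := huB; omega)
  · exact absurd h (by obtain ⟨_, _⟩ := htB; obtain ⟨_, _⟩ := huB; omega)
  · exact Or.inr (Or.inl h)
  · exact Or.inr (Or.inr h)

end NonCrossing

lemma not_isOuter_iff {m : ℕ} {θ : FP m} {B : Finset (Fin m)} (hB : B ∈ θ.parts) :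
    ¬ IsOuter θ B ↔ ∃ A ∈ θ.parts, Encloses A B := by
  simp only [IsOuter, hB, true_and, not_not]
  refine exists_congr fun A => and_congr_right fun hA => ?_
  exact strictlyEmbraces_iff_encloses (θ.nonempty_of_mem_parts hB) (θ.nonempty_of_mem_parts hA)

section Anchor

variable {m : ℕ} (θ : FP m) (S : Finset (Finset (Fin m)))

noncomputable def ancestors (B : Finset (Fin m)) : Finset (Finset (Fin m)) :=
  θ.parts.filter fun A => A = B ∨ Encloses A B

noncomputable def innerBlocks : Finset (Finset (Fin m)) :=
  θ.parts.filter fun B => ∃ A ∈ θ.parts, Encloses A B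

/-- The innermost block outside `S` among `B` and the blocks of `θ` enclosing `B`. -/
noncomputable def anchor (B : Finset (Fin m)) : Finset (Fin m) :=
  if h : (ancestors θ B \ S).Nonempty then ((ancestors θ B \ S).exists_max_image minVal h).choose
  else B

variable {θ S} {A B : Finset (Fin m)}

lemma mem_ancestors : A ∈ ancestors θ B ↔ A ∈ θ.parts ∧ (A = B ∨ Encloses A B) := mem_filter

lemma self_mem_ancestors (hB : B ∈ θ.parts) : B ∈ ancestors θ B :=
  mem_ancestors.2 ⟨hB, Or.inl rfl⟩

lemma card_innerBlocks (θ : FP m) : #(innerBlocks θ) = #θ.parts - numOuter θ := by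
  have h : innerBlocks θ = θ.parts.filter fun B => ¬ IsOuter θ B :=
    filter_congr fun B hB => (not_isOuter_iff hB).symm
  rw [h, numOuter, ← card_filter_add_card_filter_not (s := θ.parts) (fun B => IsOuter θ B)]
  omega

lemma ancestors_eq_or_encloses (hθ : IsNC θ) (hB : B.Nonempty) {A' : Finset (Fin m)}
    (hA : A ∈ ancestors θ B) (hA' : A' ∈ ancestors θ B) :
    A = A' ∨ Encloses A A' ∨ Encloses A' A := by
  obtain ⟨hAp, rfl | hAB⟩ := mem_ancestors.1 hA <;> obtain ⟨hA'p, rfl | hA'B⟩ := mem_ancestors.1 hA'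
  · exact Or.inl rfl
  · exact Or.inr (Or.inr hA'B)
  · exact Or.inr (Or.inl hAB)
  · exact eq_or_encloses_of_encloses hθ hAp hA'p hB hAB hA'B

/-- The outermost ancestor of a block is an outer block, hence not in `S`. -/
lemma ancestors_sdiff_nonempty (hS : S ⊆ innerBlocks θ) (hB : B ∈ θ.parts) :
    (ancestors θ B \ S).Nonempty := by
  obtain ⟨A, hA, hmin⟩ := (ancestors θ B).exists_min_image minVal ⟨B, self_mem_ancestors hB⟩
  refine ⟨A, mem_sdiff.2 ⟨hA, fun hAS => ?_⟩⟩
  obtain ⟨-, A', hA', hA'A⟩ := mem_filter.1 (hS hAS)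
  obtain ⟨-, hAB⟩ := mem_ancestors.1 hA
  have hA'B : Encloses A' B := hAB.elim (fun h => h ▸ hA'A) hA'A.trans
  exact absurd (hmin A' (mem_ancestors.2 ⟨hA', Or.inr hA'B⟩)) (not_le.2 hA'A.1)

lemma anchor_eq_of_forall_minVal_le (hA : A ∈ ancestors θ B \ S)
    (hmax : ∀ A' ∈ ancestors θ B \ S, minVal A' ≤ minVal A) : anchor θ S B = A := by
  have h : (ancestors θ B \ S).Nonempty := ⟨A, hA⟩
  obtain ⟨h₁, h₂⟩ := ((ancestors θ B \ S).exists_max_image minVal h).choose_spec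
  rw [anchor, dif_pos h]
  exact eq_of_minVal_eq (mem_ancestors.1 (mem_sdiff.1 h₁).1).1
    (mem_ancestors.1 (mem_sdiff.1 hA).1).1 (le_antisymm (hmax _ h₁) (h₂ A hA))

lemma anchor_spec (hS : S ⊆ innerBlocks θ) (hB : B ∈ θ.parts) :
    anchor θ S B ∈ ancestors θ B \ S ∧
      ∀ A ∈ ancestors θ B \ S, minVal A ≤ minVal (anchor θ S B) := by
  have h := ancestors_sdiff_nonempty hS hB
  rw [anchor, dif_pos h]
  exact ((ancestors θ B \ S).exists_max_image minVal h).choose_spec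

lemma anchor_mem_parts (hS : S ⊆ innerBlocks θ) (hB : B ∈ θ.parts) : anchor θ S B ∈ θ.parts :=
  (mem_ancestors.1 (mem_sdiff.1 (anchor_spec hS hB).1).1).1

lemma anchor_not_mem (hS : S ⊆ innerBlocks θ) (hB : B ∈ θ.parts) : anchor θ S B ∉ S :=
  (mem_sdiff.1 (anchor_spec hS hB).1).2

lemma anchor_eq_or_encloses (hS : S ⊆ innerBlocks θ) (hB : B ∈ θ.parts) :
    anchor θ S B = B ∨ Encloses (anchor θ S B) B :=
  (mem_ancestors.1 (mem_sdiff.1 (anchor_spec hS hB).1).1).2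

lemma anchor_self (hB : B ∈ θ.parts) (hBS : B ∉ S) : anchor θ S B = B := by
  refine anchor_eq_of_forall_minVal_le (mem_sdiff.2 ⟨self_mem_ancestors hB, hBS⟩) fun A hA => ?_
  rcases (mem_ancestors.1 (mem_sdiff.1 hA).1).2 with rfl | h
  · exact le_rfl
  · exact h.1.le

lemma eq_or_encloses_anchor (hθ : IsNC θ) (hS : S ⊆ innerBlocks θ) (hB : B ∈ θ.parts)
    (hA : A ∈ ancestors θ B \ S) : A = anchor θ S B ∨ Encloses A (anchor θ S B) := by
  obtain ⟨hanc, hmax⟩ := anchor_spec hS hB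
  rcases ancestors_eq_or_encloses hθ (θ.nonempty_of_mem_parts hB) (mem_sdiff.1 hA).1
    (mem_sdiff.1 hanc).1 with h | h | h
  · exact Or.inl h
  · exact Or.inr h
  · exact absurd (hmax A hA) (not_le.2 h.1)

lemma eq_or_encloses_anchor_of_mem_span (hθ : IsNC θ) (hS : S ⊆ innerBlocks θ)
    (hA : A ∈ θ.parts) (hAS : A ∉ S) {x : Fin m} (h₁ : minVal A < x) (h₂ : x < maxVal A) :
    A = anchor θ S (θ.part x) ∨ Encloses A (anchor θ S (θ.part x)) := by
  by_cases hx : θ.part x = A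
  · exact Or.inl (by rw [hx, anchor_self hA hAS])
  refine eq_or_encloses_anchor hθ hS (part_mem_parts θ x) (mem_sdiff.2 ⟨?_, hAS⟩)
  exact mem_ancestors.2 ⟨hA, Or.inr
    (encloses_of_mem_span hθ (part_mem_parts θ x) hA hx (self_mem_part θ x) h₁ h₂)⟩

end Anchor

lemma card_parts_ofSetoid_ker {α β : Type*} [Fintype α] [DecidableEq α] [DecidableEq β]
    (f : α → β) [DecidableRel (Setoid.ker f)] :
    #(Finpartition.ofSetoid (Setoid.ker f)).parts = #(univ.image f) := by
  have h : (Finpartition.ofSetoid (Setoid.ker f)).parts =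
      (univ.image f).image fun y => univ.filter fun b => y = f b := by
    rw [image_image]
    exact (Finpartition.ofSetSetoid_parts _ _).trans
      (image_congr fun a _ => by ext; simp [Setoid.ker_def])
  rw [h]
  refine card_image_of_injOn fun y hy y' _ hyy' => ?_
  obtain ⟨a, -, rfl⟩ := mem_image.1 hy
  simpa [eq_comm] using Finset.ext_iff.1 hyy' a

section Collapse

variable {m : ℕ}

/-- Merge every block of `S` into the block of its anchor. -/
noncomputable def collapse (P : FP m) (S : Finset (Finset (Fin m))) : FP m :=
  Finpartition.ofSetoid (Setoid.ker fun x => anchor P S (P.part x))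

variable {P : FP m} {S : Finset (Finset (Fin m))} {x y : Fin m}

lemma mem_collapse_part :
    y ∈ (collapse P S).part x ↔ anchor P S (P.part x) = anchor P S (P.part y) :=
  Finpartition.mem_part_ofSetoid_iff_rel

lemma collapse_part_eq_iff :
    (collapse P S).part x = (collapse P S).part y ↔
      anchor P S (P.part x) = anchor P S (P.part y) := by
  rw [← (collapse P S).mem_part_iff_part_eq_part (mem_univ x) (mem_univ y), mem_collapse_part,
    eq_comm]

lemma refines_collapse (P : FP m) (S : Finset (Finset (Fin m))) : Refines P (collapse P S) := by
  intro B hB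
  obtain ⟨x, hx⟩ := P.nonempty_of_mem_parts hB
  refine ⟨(collapse P S).part x, part_mem_parts _ x, fun y hy => ?_⟩
  rw [mem_collapse_part, P.part_eq_of_mem hB hx, P.part_eq_of_mem hB hy]

variable (hS : S ⊆ innerBlocks P)
include hS

lemma anchor_subset_collapse_part (x : Fin m) :
    anchor P S (P.part x) ⊆ (collapse P S).part x := by
  intro a ha
  have hA := anchor_mem_parts hS (part_mem_parts P x)
  rw [mem_collapse_part, P.part_eq_of_mem hA ha,
    anchor_self hA (anchor_not_mem hS (part_mem_parts P x))]

lemma mem_span_anchor (x : Fin m) :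
    minVal (anchor P S (P.part x)) ≤ x ∧ (x : ℕ) ≤ maxVal (anchor P S (P.part x)) := by
  have h₁ := minVal_le (self_mem_part P x)
  have h₂ := le_maxVal (self_mem_part P x)
  rcases anchor_eq_or_encloses hS (part_mem_parts P x) with h | ⟨h₃, h₄⟩
  · rw [h]
    exact ⟨h₁, h₂⟩
  · omega

lemma minVal_collapse_part (x : Fin m) :
    minVal ((collapse P S).part x) = minVal (anchor P S (P.part x)) := by
  refine le_antisymm (minVal_le_minVal_of_subset (anchor_subset_collapse_part hS x)
    (P.nonempty_of_mem_parts (anchor_mem_parts hS (part_mem_parts P x)))) ?_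
  obtain ⟨c, hc, hcv⟩ := exists_val_eq_minVal ⟨x, self_mem_part _ x⟩
  rw [← hcv, mem_collapse_part.1 hc]
  exact (mem_span_anchor hS c).1

lemma maxVal_collapse_part (x : Fin m) :
    maxVal ((collapse P S).part x) = maxVal (anchor P S (P.part x)) := by
  refine le_antisymm ?_ (maxVal_le_maxVal_of_subset (anchor_subset_collapse_part hS x)
    (P.nonempty_of_mem_parts (anchor_mem_parts hS (part_mem_parts P x))))
  obtain ⟨c, hc, hcv⟩ := exists_val_eq_maxVal ⟨x, self_mem_part _ x⟩
  rw [← hcv, mem_collapse_part.1 hc]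
  exact (mem_span_anchor hS c).2

lemma isNC_collapse (hP : IsNC P) : IsNC (collapse P S) := by
  intro i j k l hij hjk hkl hik hjl
  rw [sameBlock_iff, collapse_part_eq_iff] at hik hjl ⊢
  by_contra hij'
  have hi := mem_span_anchor hS i
  have hj := mem_span_anchor hS j
  have hk := mem_span_anchor hS k
  have hl := mem_span_anchor hS l
  rw [← hik] at hk
  rw [← hjl] at hl
  have hA := anchor_mem_parts hS (part_mem_parts P i)
  have hA' := anchor_mem_parts hS (part_mem_parts P j)
  rcases disjoint_or_encloses hP hA hA' hij' with h | h | h | h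
  · omega
  · omega
  · rcases eq_or_encloses_anchor_of_mem_span hP hS hA' (anchor_not_mem hS (part_mem_parts P j))
      (x := k) (by omega) (by omega) with h' | h'
    · exact hij' (hik.trans h'.symm)
    · rw [← hik] at h'
      exact lt_asymm h.1 h'.1
  · rcases eq_or_encloses_anchor_of_mem_span hP hS hA (anchor_not_mem hS (part_mem_parts P i))
      (x := j) (by omega) (by omega) with h' | h'
    · exact hij' h'
    · exact lt_asymm h.1 h'.1

lemma ll_collapse : Ll P (collapse P S) := by
  refine ⟨refines_collapse P S, fun C hC => ?_⟩
  obtain ⟨x, hx⟩ := (collapse P S).nonempty_of_mem_parts hC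
  obtain rfl := (collapse P S).part_eq_of_mem hC hx
  have hA := anchor_mem_parts hS (part_mem_parts P x)
  have hAC := anchor_subset_collapse_part hS x
  obtain ⟨a, ha, hav⟩ := exists_val_eq_minVal (P.nonempty_of_mem_parts hA)
  obtain ⟨b, hb, hbv⟩ := exists_val_eq_maxVal (P.nonempty_of_mem_parts hA)
  refine ⟨_, hA, a, b, isMinOf_iff.2 ⟨hAC ha, ?_⟩, isMaxOf_iff.2 ⟨hAC hb, ?_⟩, ha, hb⟩
  · rw [minVal_collapse_part hS, hav]
  · rw [maxVal_collapse_part hS, hbv]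

lemma image_anchor : univ.image (fun x => anchor P S (P.part x)) = P.parts \ S := by
  ext A
  refine ⟨fun hA => ?_, fun hA => ?_⟩
  · obtain ⟨x, -, rfl⟩ := mem_image.1 hA
    exact mem_sdiff.2 ⟨anchor_mem_parts hS (part_mem_parts P x),
      anchor_not_mem hS (part_mem_parts P x)⟩
  · obtain ⟨hAP, hAS⟩ := mem_sdiff.1 hA
    obtain ⟨x, hx⟩ := P.nonempty_of_mem_parts hAP
    exact mem_image.2 ⟨x, mem_univ x, by rw [P.part_eq_of_mem hAP hx, anchor_self hAP hAS]⟩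

lemma card_collapse : #(collapse P S).parts = #P.parts - #S := by
  rw [collapse, card_parts_ofSetoid_ker, image_anchor hS,
    card_sdiff_of_subset (hS.trans (filter_subset _ _))]

end Collapse

section Displaced

variable {m : ℕ}

noncomputable def displaced (P R : FP m) : Finset (Finset (Fin m)) :=
  P.parts.filter fun B => ∃ C ∈ R.parts, B ⊆ C ∧ minVal C < minVal B

variable {P R : FP m} {B C : Finset (Fin m)}

lemma subset_of_refines (h : Refines P R) (hB : B ∈ P.parts) (hC : C ∈ R.parts) {x : Fin m}
    (hxB : x ∈ B) (hxC : x ∈ C) : B ⊆ C := by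
  obtain ⟨C', hC', hBC'⟩ := h B hB
  exact R.eq_of_mem_parts hC' hC (hBC' hxB) hxC ▸ hBC'

lemma exists_spanning_block (hLl : Ll P R) (hC : C ∈ R.parts) :
    ∃ D ∈ P.parts, D ⊆ C ∧ minVal D = minVal C ∧ maxVal D = maxVal C := by
  obtain ⟨D, hD, x, y, hx, hy, hxD, hyD⟩ := hLl.2 C hC
  rw [isMinOf_iff] at hx
  rw [isMaxOf_iff] at hy
  have hDC := subset_of_refines hLl.1 hD hC hxD hx.1
  have := minVal_le hxD
  have := le_maxVal hyD
  have := minVal_le_minVal_of_subset hDC ⟨x, hxD⟩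
  have := maxVal_le_maxVal_of_subset hDC ⟨x, hxD⟩
  exact ⟨D, hD, hDC, by omega, by omega⟩

lemma displaced_subset_innerBlocks (hLl : Ll P R) : displaced P R ⊆ innerBlocks P := by
  intro B hB
  obtain ⟨hBP, C, hC, hBC, hlt⟩ := mem_filter.1 hB
  obtain ⟨D, hD, -, hmin, hmax⟩ := exists_spanning_block hLl hC
  have hBD : B ≠ D := by
    rintro rfl
    omega
  exact mem_filter.2 ⟨hBP, D, hD, encloses_of_subset_span hBP hD hBD hBC hmin hmax⟩

lemma anchor_displaced (hR : IsNC R) (hLl : Ll P R) (hB : B ∈ P.parts) (hC : C ∈ R.parts)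
    (hBC : B ⊆ C) {D : Finset (Fin m)} (hD : D ∈ P.parts) (hDC : D ⊆ C)
    (hmin : minVal D = minVal C) (hmax : maxVal D = maxVal C) :
    anchor P (displaced P R) B = D := by
  have hDne := P.nonempty_of_mem_parts hD
  refine anchor_eq_of_forall_minVal_le (mem_sdiff.2 ⟨mem_ancestors.2 ⟨hD, ?_⟩, ?_⟩) ?_
  · by_cases hBD : B = D
    · exact Or.inl hBD.symm
    · exact Or.inr (encloses_of_subset_span hB hD hBD hBC hmin hmax)
  · intro hDdisp
    obtain ⟨-, C', hC', hDC', hlt⟩ := mem_filter.1 hDdisp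
    obtain ⟨x, hx⟩ := hDne
    obtain rfl := R.eq_of_mem_parts hC hC' (hDC hx) (hDC' hx)
    omega
  · intro A hA
    obtain ⟨hAanc, hAdisp⟩ := mem_sdiff.1 hA
    obtain ⟨hAP, hAB⟩ := mem_ancestors.1 hAanc
    by_contra hlt
    refine hAdisp (mem_filter.2 ⟨hAP, C, hC, ?_, by omega⟩)
    rcases hAB with rfl | hAB
    · exact hBC
    -- `C` and the block of `R` through `min A` cross unless they coincide
    obtain ⟨a, ha, hav⟩ := exists_val_eq_minVal (P.nonempty_of_mem_parts hAP)
    obtain ⟨a', ha', ha'v⟩ := exists_val_eq_maxVal (P.nonempty_of_mem_parts hAP)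
    obtain ⟨d, hd, hdv⟩ := exists_val_eq_minVal hDne
    obtain ⟨b, hb⟩ := P.nonempty_of_mem_parts hB
    have := minVal_le hb
    have := le_maxVal hb
    obtain ⟨_, _⟩ := hAB
    have hAC := subset_of_refines hLl.1 hAP (part_mem_parts R a) ha (self_mem_part R a)
    obtain rfl := eq_of_interleaved hR hC (part_mem_parts R a) (hDC hd) (hBC hb)
      (self_mem_part R a) (hAC ha') (by omega) (by omega) (by omega)
    exact hAC

lemma collapse_displaced (hR : IsNC R) (hLl : Ll P R) : collapse P (displaced P R) = R := by
  have key : ∀ z, ∃ D ∈ P.parts, anchor P (displaced P R) (P.part z) = D ∧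
      D ⊆ R.part z ∧ minVal D = minVal (R.part z) := fun z => by
    obtain ⟨D, hD, hDC, hmin, hmax⟩ := exists_spanning_block hLl (part_mem_parts R z)
    refine ⟨D, hD, anchor_displaced hR hLl (part_mem_parts P z) (part_mem_parts R z) ?_ hD hDC
      hmin hmax, hDC, hmin⟩
    exact subset_of_refines hLl.1 (part_mem_parts P z) (part_mem_parts R z) (self_mem_part P z)
      (self_mem_part R z)
  refine eq_of_part_eq fun x => Finset.ext fun y => ?_
  obtain ⟨D, hD, hxD, hDx, hminx⟩ := key x
  obtain ⟨D', hD', hyD', hD'y, hminy⟩ := key y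
  rw [mem_collapse_part, hxD, hyD', R.mem_part_iff_part_eq_part (mem_univ y) (mem_univ x)]
  constructor
  · rintro rfl
    obtain ⟨z, hz⟩ := P.nonempty_of_mem_parts hD
    exact R.eq_of_mem_parts (part_mem_parts R y) (part_mem_parts R x) (hD'y hz) (hDx hz)
  · intro h
    exact eq_of_minVal_eq hD hD' (by rw [hminx, hminy, h])

lemma displaced_collapse {S : Finset (Finset (Fin m))} (hS : S ⊆ innerBlocks P) :
    displaced P (collapse P S) = S := by
  ext B
  constructor
  · intro hB
    obtain ⟨hBP, C, hC, hBC, hlt⟩ := mem_filter.1 hB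
    obtain ⟨x, hx⟩ := P.nonempty_of_mem_parts hBP
    obtain rfl := (collapse P S).part_eq_of_mem hC (hBC hx)
    by_contra hBS
    rw [minVal_collapse_part hS, P.part_eq_of_mem hBP hx, anchor_self hBP hBS] at hlt
    exact lt_irrefl _ hlt
  · intro hBS
    have hBP := (mem_filter.1 (hS hBS)).1
    obtain ⟨x, hx⟩ := P.nonempty_of_mem_parts hBP
    refine mem_filter.2 ⟨hBP, _, part_mem_parts _ x, subset_of_refines (refines_collapse P S) hBP
      (part_mem_parts _ x) hx (self_mem_part _ x), ?_⟩
    rw [minVal_collapse_part hS, P.part_eq_of_mem hBP hx]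
    rcases anchor_eq_or_encloses hS hBP with h | h
    · exact absurd (h ▸ anchor_not_mem hS hBP) (not_not.2 hBS)
    · exact h.1

lemma card_displaced (hR : IsNC R) (hLl : Ll P R) :
    #(displaced P R) = #P.parts - #R.parts := by
  have h := card_collapse (displaced_subset_innerBlocks hLl)
  rw [collapse_displaced hR hLl] at h
  have : #(displaced P R) ≤ #P.parts := card_filter_le _ _
  omega

end Displaced

theorem statement1_general (n : ℕ) (π : FP n) (hπ : IsNC π)
    (p : ℕ) (hp1 : numOuter π ≤ p) (hp2 : p ≤ π.parts.card) :
    {ρ : FP n | IsNC ρ ∧ Ll π ρ ∧ ρ.parts.card = p}.ncard =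
      Nat.choose (π.parts.card - numOuter π) (p - numOuter π) := by
  have hbij : Set.BijOn (displaced π) {ρ : FP n | IsNC ρ ∧ Ll π ρ ∧ ρ.parts.card = p}
      (powersetCard (#π.parts - p) (innerBlocks π)) := by
    refine ⟨fun ρ ⟨hρ, hLl, hcard⟩ => ?_, fun ρ ⟨hρ, hLl, _⟩ ρ' ⟨hρ', hLl', _⟩ h => ?_,
      fun S hS => ?_⟩
    · refine mem_powersetCard.2 ⟨displaced_subset_innerBlocks hLl, ?_⟩
      rw [card_displaced hρ hLl, hcard]
    · rw [← collapse_displaced hρ hLl, ← collapse_displaced hρ' hLl', h]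
    · obtain ⟨hS, hScard⟩ := mem_powersetCard.1 hS
      have := card_le_card hS
      rw [card_innerBlocks] at this
      exact ⟨collapse π S, ⟨isNC_collapse hS hπ, ll_collapse hS, by rw [card_collapse hS]; omega⟩,
        displaced_collapse hS⟩
  rw [hbij.ncard_eq, Set.ncard_coe_finset, card_powersetCard, card_innerBlocks,
    ← Nat.choose_symm (by omega)]
  congr 1
  omega

/-- Proposition 2.13: for `π ∈ NC(n)` and `|π|_out ≤ p ≤ |π|`, the
number of `ρ ∈ NC(n)` with `ρ ≫ π` and `|ρ| = p` is `C(|π| - |π|_out, p - |π|_out)`. -/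
theorem statement1 (n : ℕ) (hn : 0 < n) (π : FP n) (hπ : IsNC π)
    (p : ℕ) (hp1 : numOuter π ≤ p) (hp2 : p ≤ π.parts.card) :
    {ρ : FP n | IsNC ρ ∧ Ll π ρ ∧ ρ.parts.card = p}.ncard =
      Nat.choose (π.parts.card - numOuter π) (p - numOuter π) :=
  statement1_general n π hπ p hp1 hp2

end BBP
end

section
/- Let k be a positive integer, let μ ∈ D_alg(k), and set f = R_μ and g = η_μ. Then for every n ≥ 1 and all i₁,…,i_n ∈ {1,…,k}: Cf_{(i₁,…,i_n)}(g) = Σ_{π ∈ NC(n), π ≪ 1_n} Cf_{(i₁,…,i_n);π}(f). -/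
open Finset

attribute [local instance] Classical.propDecidable

open scoped ComplexOrder

namespace BBP

/-!
Sort the partitions of `{0, …, n}` by the last element `j` of the block containing `0`. For
interval and for non-crossing partitions no block crosses the cut after `j`, so such a partition
is the juxtaposition of a partition of `{0, …, j}` in which `0` and `j` share a block and an
arbitrary partition of `{j+1, …, n}` of the same kind. For interval partitions the first factor
must be the one-block partition, whence `M_n = ∑_{j<n} η_j M_{n-1-j} + η_n`; for non-crossing
ones the same decomposition gives `M_n = ∑_{j<n} (∑_{π ≪ 1_j} R_π) M_{n-1-j} + ∑_{π ≪ 1_n} R_π`.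
Comparing the two recursions by strong induction on `n` identifies `η_n` with `∑_{π ≪ 1_n} R_π`.
-/

section SameBlock

variable {m : ℕ} {π ρ : FP m} {a b c : Fin m}

lemma sameBlock_iff_mem_part : SameBlock π a b ↔ b ∈ π.part a := by
  rw [Finpartition.mem_part_iff_exists]
  exact exists_congr fun B => and_congr_right fun _ => and_comm

lemma sameBlock_iff_part_eq : SameBlock π a b ↔ π.part a = π.part b := by
  rw [sameBlock_iff_mem_part, π.mem_part_iff_part_eq_part (mem_univ b) (mem_univ a), eq_comm]

lemma SameBlock.refl (π : FP m) (a : Fin m) : SameBlock π a a :=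
  sameBlock_iff_part_eq.mpr rfl

lemma SameBlock.symm (h : SameBlock π a b) : SameBlock π b a :=
  sameBlock_iff_part_eq.mpr (sameBlock_iff_part_eq.mp h).symm

lemma SameBlock.trans (h : SameBlock π a b) (h' : SameBlock π b c) : SameBlock π a c :=
  sameBlock_iff_part_eq.mpr ((sameBlock_iff_part_eq.mp h).trans (sameBlock_iff_part_eq.mp h'))

lemma mem_parts_iff_exists_part_eq {B : Finset (Fin m)} : B ∈ π.parts ↔ ∃ a, π.part a = B := by
  refine ⟨fun hB => ?_, fun ⟨a, ha⟩ => ha ▸ π.part_mem.mpr (mem_univ a)⟩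
  obtain ⟨a, ha⟩ := π.nonempty_of_mem_parts hB
  exact ⟨a, π.part_eq_of_mem hB ha⟩

lemma ext_of_sameBlock (h : ∀ a b, SameBlock π a b ↔ SameBlock ρ a b) : π = ρ := by
  have hpart : ∀ a, π.part a = ρ.part a := fun a => by
    ext b
    rw [← sameBlock_iff_mem_part, ← sameBlock_iff_mem_part, h]
  ext B
  simp only [mem_parts_iff_exists_part_eq, hpart]

def blockSetoid (π : FP m) : Setoid (Fin m) :=
  ⟨SameBlock π, ⟨SameBlock.refl π, SameBlock.symm, SameBlock.trans⟩⟩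

end SameBlock

noncomputable def comap {a m : ℕ} (π : FP m) (e : Fin a → Fin m) : FP a :=
  Finpartition.ofSetoid ((blockSetoid π).comap e)

lemma sameBlock_comap {a m : ℕ} {π : FP m} {e : Fin a → Fin m} {x y : Fin a} :
    SameBlock (comap π e) x y ↔ SameBlock π (e x) (e y) := by
  rw [sameBlock_iff_mem_part, comap, Finpartition.mem_part_ofSetoid_iff_rel]
  rfl

lemma sameBlock_fullPart {n : ℕ} (a b : Fin (n+1)) : SameBlock (fullPart n) a b :=
  ⟨univ, mem_singleton_self _, mem_univ a, mem_univ b⟩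

lemma ll_fullPart_iff {n : ℕ} {π : FP (n+1)} :
    Ll π (fullPart n) ↔ SameBlock π 0 (Fin.last n) := by
  constructor
  · rintro ⟨-, h⟩
    obtain ⟨B, hB, x, y, hx, hy, hxB, hyB⟩ := h univ (mem_singleton_self _)
    obtain rfl : x = 0 := le_antisymm (hx.2 0 (mem_univ _)) (Fin.zero_le x)
    obtain rfl : y = Fin.last n := le_antisymm (Fin.le_last y) (hy.2 _ (mem_univ _))
    exact ⟨B, hB, hxB, hyB⟩
  · rintro ⟨B, hB, h0, hl⟩
    refine ⟨fun B' _ => ⟨univ, mem_singleton_self _, subset_univ _⟩, fun C hC => ?_⟩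
    obtain rfl := mem_singleton.mp hC
    exact ⟨B, hB, 0, Fin.last n, ⟨mem_univ _, fun y _ => Fin.zero_le y⟩,
      ⟨mem_univ _, fun y _ => Fin.le_last y⟩, h0, hl⟩

section Coefficients

variable {k : ℕ}

lemma partCoeff_eq_orderEmbOfFin {m : ℕ} (f : NCSeries k) (w : Fin (m+1) → Fin k)
    {B : Finset (Fin (m+1))} {c : ℕ} (hc : B.card = c + 1) :
    partCoeff f w B = f c (w ∘ B.orderEmbOfFin hc) := by
  obtain rfl : c = B.card - 1 := by omega
  rw [partCoeff, dif_pos (card_pos.mp (by omega))]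
  rfl

lemma partCoeff_image {a m : ℕ} (f : NCSeries k) (w : Fin (m+1) → Fin k)
    (e : Fin (a+1) ↪o Fin (m+1)) (B : Finset (Fin (a+1))) :
    partCoeff f w (B.image e) = partCoeff f (w ∘ e) B := by
  rcases B.eq_empty_or_nonempty with rfl | hB
  · simp [partCoeff]
  obtain ⟨c, hc⟩ : ∃ c, B.card = c + 1 := ⟨B.card - 1, by have := hB.card_pos; omega⟩
  have hc' : (B.image e).card = c + 1 := by rw [card_image_of_injective _ e.injective, hc]
  rw [partCoeff_eq_orderEmbOfFin f w hc', partCoeff_eq_orderEmbOfFin f _ hc]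
  have : (B.image e).orderEmbOfFin hc' = e ∘ B.orderEmbOfFin hc :=
    (orderEmbOfFin_unique hc' (fun x => mem_image_of_mem e (orderEmbOfFin_mem B hc x))
      (e.strictMono.comp (B.orderEmbOfFin hc).strictMono)).symm
  rw [this]
  rfl

lemma genCoeff_fullPart {n : ℕ} (f : NCSeries k) (w : Fin (n+1) → Fin k) :
    genCoeff f w (fullPart n) = f n w := by
  have hc : (univ : Finset (Fin (n+1))).card = n + 1 := card_fin _
  have : ⇑((univ : Finset (Fin (n+1))).orderEmbOfFin hc) = id :=
    (orderEmbOfFin_unique hc (fun x => mem_univ x) strictMono_id).symm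
  rw [genCoeff, show (fullPart n).parts = {univ} from rfl, prod_singleton,
    partCoeff_eq_orderEmbOfFin f w hc, this]
  rfl

end Coefficients

section Glue

variable {n : ℕ} (j : Fin n)

def lowEmb : Fin (j+1) ↪o Fin (n+1) := Fin.castLEOrderEmb (by omega)

/-- `n-1-j+1` is the size `n-j`, written as a successor so that `NCSeries` and `genCoeff`
apply. -/
def highEmb : Fin (n-1-j+1) ↪o Fin (n+1) :=
  OrderEmbedding.ofStrictMono (fun x => ⟨j + 1 + x, by omega⟩) fun _ _ h =>
    Fin.mk_lt_mk.mpr (Nat.add_lt_add_left h _)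

variable {j}

@[simp] lemma val_lowEmb (x : Fin (j+1)) : (lowEmb j x : ℕ) = x := rfl

@[simp] lemma val_highEmb (y : Fin (n-1-j+1)) : (highEmb j y : ℕ) = j + 1 + y := rfl

lemma lowEmb_le (x : Fin (j+1)) : lowEmb j x ≤ j.castSucc := by
  rw [Fin.le_def, val_lowEmb, Fin.val_castSucc]; omega

lemma castSucc_lt_highEmb (y : Fin (n-1-j+1)) : j.castSucc < highEmb j y := by
  rw [Fin.lt_def, val_highEmb, Fin.val_castSucc]; omega

lemma exists_lowEmb_eq {z : Fin (n+1)} (hz : z ≤ j.castSucc) : ∃ x, lowEmb j x = z := by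
  rw [Fin.le_def, Fin.val_castSucc] at hz
  exact ⟨⟨z, by omega⟩, rfl⟩

lemma exists_highEmb_eq {z : Fin (n+1)} (hz : j.castSucc < z) : ∃ y, highEmb j y = z := by
  rw [Fin.lt_def, Fin.val_castSucc] at hz
  exact ⟨⟨z - (j + 1), by omega⟩, Fin.ext (show (j : ℕ) + 1 + (z - (j + 1)) = z by omega)⟩

lemma lowEmb_ne_highEmb (x : Fin (j+1)) (y : Fin (n-1-j+1)) : lowEmb j x ≠ highEmb j y :=
  ((lowEmb_le x).trans_lt (castSucc_lt_highEmb y)).ne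

lemma eq_image_part_of_mem {a m : ℕ} {π : FP a} {e : Fin a ↪o Fin m} {x : Fin a}
    {t : Finset (Fin m)} (ht : t ∈ π.parts.image (image e)) (hx : e x ∈ t) :
    t = (π.part x).image e := by
  obtain ⟨B, hB, rfl⟩ := mem_image.mp ht
  obtain ⟨y, hy, hyx⟩ := mem_image.mp hx
  rw [← e.injective hyx, π.part_eq_of_mem hB hy]

lemma existsUnique_mem_image_union {a b m : ℕ} {π₁ : FP a} {π₂ : FP b} {e₁ : Fin a ↪o Fin m}
    {e₂ : Fin b ↪o Fin m} (he : ∀ x y, e₁ x ≠ e₂ y) (x : Fin a) :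
    ∃! t, t ∈ π₁.parts.image (image e₁) ∪ π₂.parts.image (image e₂) ∧ e₁ x ∈ t := by
  refine ⟨(π₁.part x).image e₁, ⟨mem_union_left _ (mem_image_of_mem _
    (π₁.part_mem.mpr (mem_univ x))), mem_image_of_mem _ (π₁.mem_part (mem_univ x))⟩, ?_⟩
  rintro t ⟨ht, hxt⟩
  rcases mem_union.mp ht with ht | ht
  · exact eq_image_part_of_mem ht hxt
  · obtain ⟨C, -, rfl⟩ := mem_image.mp ht
    obtain ⟨y, -, hy⟩ := mem_image.mp hxt
    exact absurd hy.symm (he x y)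

variable (j)

noncomputable def glue (π₁ : FP (j+1)) (π₂ : FP (n-1-j+1)) : FP (n+1) :=
  Finpartition.ofExistsUnique
    (π₁.parts.image (image (lowEmb j)) ∪ π₂.parts.image (image (highEmb j)))
    (fun _ _ => subset_univ _)
    (fun z _ => by
      rcases le_or_gt z j.castSucc with hz | hz
      · obtain ⟨x, rfl⟩ := exists_lowEmb_eq hz
        exact existsUnique_mem_image_union lowEmb_ne_highEmb x
      · obtain ⟨y, rfl⟩ := exists_highEmb_eq hz
        rw [union_comm]
        exact existsUnique_mem_image_union (fun y x => (lowEmb_ne_highEmb x y).symm) y)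
    (by
      simp only [mem_union, mem_image, image_eq_empty, not_or, not_exists, not_and]
      exact ⟨fun B hB => (π₁.nonempty_of_mem_parts hB).ne_empty,
        fun B hB => (π₂.nonempty_of_mem_parts hB).ne_empty⟩)

variable {j} {π₁ : FP (j+1)} {π₂ : FP (n-1-j+1)}

lemma glue_parts : (glue j π₁ π₂).parts =
    π₁.parts.image (image (lowEmb j)) ∪ π₂.parts.image (image (highEmb j)) := rfl

lemma sameBlock_image_iff {a m : ℕ} {π : FP a} {e : Fin a ↪o Fin m} {u v : Fin m} :
    (∃ t ∈ π.parts.image (image e), u ∈ t ∧ v ∈ t) ↔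
      ∃ x y, e x = u ∧ e y = v ∧ SameBlock π x y := by
  constructor
  · rintro ⟨_, ht, hu, hv⟩
    obtain ⟨B, hB, rfl⟩ := mem_image.mp ht
    obtain ⟨x, hx, rfl⟩ := mem_image.mp hu
    obtain ⟨y, hy, rfl⟩ := mem_image.mp hv
    exact ⟨x, y, rfl, rfl, B, hB, hx, hy⟩
  · rintro ⟨x, y, rfl, rfl, B, hB, hx, hy⟩
    exact ⟨_, mem_image_of_mem _ hB, mem_image_of_mem _ hx, mem_image_of_mem _ hy⟩

lemma sameBlock_glue_iff {u v : Fin (n+1)} : SameBlock (glue j π₁ π₂) u v ↔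
    (∃ x y, lowEmb j x = u ∧ lowEmb j y = v ∧ SameBlock π₁ x y) ∨
      ∃ x y, highEmb j x = u ∧ highEmb j y = v ∧ SameBlock π₂ x y := by
  rw [← sameBlock_image_iff, ← sameBlock_image_iff, ← exists_or]
  simp only [SameBlock, glue_parts, mem_union, or_and_right]

lemma sameBlock_glue_lowEmb {x y : Fin (j+1)} :
    SameBlock (glue j π₁ π₂) (lowEmb j x) (lowEmb j y) ↔ SameBlock π₁ x y := by
  rw [sameBlock_glue_iff]
  constructor
  · rintro (⟨x', y', hx, hy, h⟩ | ⟨x', -, hx, -⟩)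
    · rwa [← (lowEmb j).injective hx, ← (lowEmb j).injective hy]
    · exact absurd hx.symm (lowEmb_ne_highEmb x x')
  · exact fun h => Or.inl ⟨x, y, rfl, rfl, h⟩

lemma sameBlock_glue_highEmb {x y : Fin (n-1-j+1)} :
    SameBlock (glue j π₁ π₂) (highEmb j x) (highEmb j y) ↔ SameBlock π₂ x y := by
  rw [sameBlock_glue_iff]
  constructor
  · rintro (⟨x', -, hx, -⟩ | ⟨x', y', hx, hy, h⟩)
    · exact absurd hx (lowEmb_ne_highEmb x' x)
    · rwa [← (highEmb j).injective hx, ← (highEmb j).injective hy]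
  · exact fun h => Or.inr ⟨x, y, rfl, rfl, h⟩

lemma SameBlock.le_iff_of_glue {u v : Fin (n+1)} (h : SameBlock (glue j π₁ π₂) u v) :
    u ≤ j.castSucc ↔ v ≤ j.castSucc := by
  rcases sameBlock_glue_iff.mp h with ⟨x, y, rfl, rfl, -⟩ | ⟨x, y, rfl, rfl, -⟩
  · exact iff_of_true (lowEmb_le x) (lowEmb_le y)
  · exact iff_of_false (castSucc_lt_highEmb x).not_ge (castSucc_lt_highEmb y).not_ge

lemma comap_glue_lowEmb : comap (glue j π₁ π₂) (lowEmb j) = π₁ :=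
  ext_of_sameBlock fun _ _ => sameBlock_comap.trans sameBlock_glue_lowEmb

lemma comap_glue_highEmb : comap (glue j π₁ π₂) (highEmb j) = π₂ :=
  ext_of_sameBlock fun _ _ => sameBlock_comap.trans sameBlock_glue_highEmb

lemma glue_comap {π : FP (n+1)} (h : ∀ x y, ¬ SameBlock π (lowEmb j x) (highEmb j y)) :
    glue j (comap π (lowEmb j)) (comap π (highEmb j)) = π := by
  have key : ∀ u v, u ≤ j.castSucc → (SameBlock (glue j (comap π (lowEmb j))
      (comap π (highEmb j))) u v ↔ SameBlock π u v) := by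
    intro u v hu
    obtain ⟨x, rfl⟩ := exists_lowEmb_eq hu
    rcases le_or_gt v j.castSucc with hv | hv
    · obtain ⟨y, rfl⟩ := exists_lowEmb_eq hv
      exact sameBlock_glue_lowEmb.trans sameBlock_comap
    · obtain ⟨y, rfl⟩ := exists_highEmb_eq hv
      exact iff_of_false (fun h' => hv.not_ge (h'.le_iff_of_glue.mp (lowEmb_le x))) (h x y)
  refine ext_of_sameBlock fun u v => ?_
  rcases le_or_gt u j.castSucc with hu | hu
  · exact key u v hu
  rcases le_or_gt v j.castSucc with hv | hv
  · exact ⟨fun h' => ((key v u hv).mp h'.symm).symm, fun h' => ((key v u hv).mpr h'.symm).symm⟩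
  obtain ⟨x, rfl⟩ := exists_highEmb_eq hu
  obtain ⟨y, rfl⟩ := exists_highEmb_eq hv
  exact sameBlock_glue_highEmb.trans sameBlock_comap

lemma genCoeff_glue {k : ℕ} (s : NCSeries k) (w : Fin (n+1) → Fin k) :
    genCoeff s w (glue j π₁ π₂) =
      genCoeff s (w ∘ lowEmb j) π₁ * genCoeff s (w ∘ highEmb j) π₂ := by
  have hdisj : Disjoint (π₁.parts.image (image (lowEmb j)))
      (π₂.parts.image (image (highEmb j))) := by
    rw [disjoint_left]
    intro t ht ht'
    obtain ⟨B, hB, rfl⟩ := mem_image.mp ht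
    obtain ⟨C, -, hCB⟩ := mem_image.mp ht'
    obtain ⟨x, hx⟩ := π₁.nonempty_of_mem_parts hB
    obtain ⟨y, -, hy⟩ := mem_image.mp (hCB ▸ mem_image_of_mem (lowEmb j) hx)
    exact lowEmb_ne_highEmb x y hy.symm
  rw [genCoeff, glue_parts, prod_union hdisj,
    prod_image fun _ _ _ _ h => image_injective (lowEmb j).injective h,
    prod_image fun _ _ _ _ h => image_injective (highEmb j).injective h]
  simp only [partCoeff_image]
  rfl

end Glue

section FirstBlock

variable {n : ℕ} {π : FP (n+1)}

noncomputable def firstBlockEnd (π : FP (n+1)) : Fin (n+1) :=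
  (π.part 0).max' ⟨0, π.mem_part (mem_univ 0)⟩

lemma firstBlockEnd_eq_iff {c : Fin (n+1)} :
    firstBlockEnd π = c ↔ SameBlock π 0 c ∧ ∀ v, SameBlock π 0 v → v ≤ c := by
  simp only [sameBlock_iff_mem_part]
  exact max'_eq_iff _ _ c

lemma sameBlock_firstBlockEnd (π : FP (n+1)) : SameBlock π 0 (firstBlockEnd π) :=
  (firstBlockEnd_eq_iff.mp rfl).1

lemma le_firstBlockEnd {v : Fin (n+1)} (h : SameBlock π 0 v) : v ≤ firstBlockEnd π :=
  (firstBlockEnd_eq_iff.mp rfl).2 v h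

lemma firstBlockEnd_eq_last_iff : firstBlockEnd π = Fin.last n ↔ Ll π (fullPart n) := by
  rw [firstBlockEnd_eq_iff, ll_fullPart_iff]
  exact and_iff_left fun v _ => Fin.le_last v

lemma firstBlockEnd_glue {j : Fin n} {π₁ : FP (j+1)} {π₂ : FP (n-1-j+1)} :
    firstBlockEnd (glue j π₁ π₂) = j.castSucc ↔ Ll π₁ (fullPart j) := by
  have h0 : lowEmb j 0 = 0 := rfl
  have hlast : lowEmb j (Fin.last j) = j.castSucc := rfl
  rw [firstBlockEnd_eq_iff, ll_fullPart_iff, ← sameBlock_glue_lowEmb (π₂ := π₂), h0, hlast]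
  exact and_iff_left fun v hv => hv.le_iff_of_glue.mp (Fin.zero_le _)

end FirstBlock

lemma isIntervalPartition_iff {m : ℕ} {π : FP m} : IsIntervalPartition π ↔
    ∀ x y z : Fin m, x ≤ y → y ≤ z → SameBlock π x z → SameBlock π x y := by
  constructor
  · rintro h x y z hxy hyz ⟨B, hB, hx, hz⟩
    exact ⟨B, hB, hx, h B hB x hx z hz y hxy hyz⟩
  · intro h B hB x hx z hz y hxy hyz
    obtain ⟨C, hC, hxC, hyC⟩ := h x y z hxy hyz ⟨B, hB, hx, hz⟩
    rwa [π.eq_of_mem_parts hB hC hx hxC]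

lemma IsIntervalPartition.isNC {m : ℕ} {π : FP m} (h : IsIntervalPartition π) : IsNC π :=
  fun _ _ _ _ hij hjk _ hik _ => isIntervalPartition_iff.mp h _ _ _ hij.le hjk.le hik

lemma IsNC.comap {a m : ℕ} {π : FP m} (h : IsNC π) (e : Fin a ↪o Fin m) : IsNC (comap π e) := by
  intro x y z t hxy hyz hzt hxz hyt
  rw [sameBlock_comap] at hxz hyt ⊢
  exact h _ _ _ _ (e.lt_iff_lt.mpr hxy) (e.lt_iff_lt.mpr hyz) (e.lt_iff_lt.mpr hzt) hxz hyt

lemma IsIntervalPartition.comap {a m : ℕ} {π : FP m} (h : IsIntervalPartition π)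
    (e : Fin a ↪o Fin m) : IsIntervalPartition (comap π e) := by
  rw [isIntervalPartition_iff] at h ⊢
  intro x y z hxy hyz hxz
  rw [sameBlock_comap] at hxz ⊢
  exact h _ _ _ (e.le_iff_le.mpr hxy) (e.le_iff_le.mpr hyz) hxz

lemma IsNC.not_sameBlock_of_le_firstBlockEnd_lt {n : ℕ} {π : FP (n+1)} (h : IsNC π)
    {u v : Fin (n+1)} (hu : u ≤ firstBlockEnd π) (hv : firstBlockEnd π < v) :
    ¬ SameBlock π u v := by
  intro huv
  have h0c := sameBlock_firstBlockEnd π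
  by_cases h0u : SameBlock π 0 u
  · exact hv.not_ge (le_firstBlockEnd (h0u.trans huv))
  have hu0 : 0 < u := (Fin.pos_iff_ne_zero' u).mpr fun hu0 => h0u (hu0 ▸ SameBlock.refl π 0)
  have huc : u < firstBlockEnd π := hu.lt_of_ne fun huc => h0u (huc ▸ h0c)
  exact h0u (h 0 u _ v hu0 huc hv h0c huv)

lemma IsNC.glue {n : ℕ} {j : Fin n} {π₁ : FP (j+1)} {π₂ : FP (n-1-j+1)} (h₁ : IsNC π₁)
    (h₂ : IsNC π₂) : IsNC (glue j π₁ π₂) := by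
  intro a b c d hab hbc hcd hac hbd
  by_cases ha : a ≤ j.castSucc
  · have hc := hac.le_iff_of_glue.mp ha
    have hb := hbc.le.trans hc
    obtain ⟨a, rfl⟩ := exists_lowEmb_eq ha
    obtain ⟨b, rfl⟩ := exists_lowEmb_eq hb
    obtain ⟨c, rfl⟩ := exists_lowEmb_eq hc
    obtain ⟨d, rfl⟩ := exists_lowEmb_eq (hbd.le_iff_of_glue.mp hb)
    rw [sameBlock_glue_lowEmb] at hac hbd ⊢
    simp only [OrderEmbedding.lt_iff_lt] at hab hbc hcd
    exact h₁ a b c d hab hbc hcd hac hbd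
  · rw [not_le] at ha
    obtain ⟨a, rfl⟩ := exists_highEmb_eq ha
    obtain ⟨b, rfl⟩ := exists_highEmb_eq (ha.trans hab)
    obtain ⟨c, rfl⟩ := exists_highEmb_eq ((ha.trans hab).trans hbc)
    obtain ⟨d, rfl⟩ := exists_highEmb_eq (((ha.trans hab).trans hbc).trans hcd)
    rw [sameBlock_glue_highEmb] at hac hbd ⊢
    simp only [OrderEmbedding.lt_iff_lt] at hab hbc hcd
    exact h₂ a b c d hab hbc hcd hac hbd

lemma IsIntervalPartition.glue {n : ℕ} {j : Fin n} {π₁ : FP (j+1)} {π₂ : FP (n-1-j+1)}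
    (h₁ : IsIntervalPartition π₁) (h₂ : IsIntervalPartition π₂) :
    IsIntervalPartition (glue j π₁ π₂) := by
  rw [isIntervalPartition_iff] at h₁ h₂ ⊢
  intro x y z hxy hyz hxz
  by_cases hx : x ≤ j.castSucc
  · have hz := hxz.le_iff_of_glue.mp hx
    obtain ⟨x, rfl⟩ := exists_lowEmb_eq hx
    obtain ⟨y, rfl⟩ := exists_lowEmb_eq (hyz.trans hz)
    obtain ⟨z, rfl⟩ := exists_lowEmb_eq hz
    rw [sameBlock_glue_lowEmb] at hxz ⊢
    simp only [OrderEmbedding.le_iff_le] at hxy hyz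
    exact h₁ x y z hxy hyz hxz
  · rw [not_le] at hx
    obtain ⟨x, rfl⟩ := exists_highEmb_eq hx
    obtain ⟨y, rfl⟩ := exists_highEmb_eq (hx.trans_le hxy)
    obtain ⟨z, rfl⟩ := exists_highEmb_eq ((hx.trans_le hxy).trans_le hyz)
    rw [sameBlock_glue_highEmb] at hxz ⊢
    simp only [OrderEmbedding.le_iff_le] at hxy hyz
    exact h₂ x y z hxy hyz hxz

noncomputable def genCoeffSum {k m : ℕ} (Q : FP (m+1) → Prop) (s : NCSeries k)
    (w : Fin (m+1) → Fin k) : ℂ :=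
  ∑ π ∈ univ.filter Q, genCoeff s w π

structure IsSplittable (Q : ∀ m, FP m → Prop) : Prop where
  comap_mem {a m : ℕ} {π : FP m} (e : Fin a ↪o Fin m) : Q m π → Q a (comap π e)
  glue_mem {n : ℕ} {j : Fin n} {π₁ : FP (j+1)} {π₂ : FP (n-1-j+1)} :
    Q _ π₁ → Q _ π₂ → Q (n+1) (glue j π₁ π₂)
  not_sameBlock {n : ℕ} {π : FP (n+1)} {u v : Fin (n+1)} :
    Q _ π → u ≤ firstBlockEnd π → firstBlockEnd π < v → ¬ SameBlock π u v

lemma isSplittable_isNC : IsSplittable fun _ => IsNC :=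
  ⟨fun e h => h.comap e, IsNC.glue, fun h => h.not_sameBlock_of_le_firstBlockEnd_lt⟩

lemma isSplittable_isIntervalPartition : IsSplittable fun _ => IsIntervalPartition :=
  ⟨fun e h => h.comap e, IsIntervalPartition.glue,
    fun h => h.isNC.not_sameBlock_of_le_firstBlockEnd_lt⟩

namespace IsSplittable

variable {Q : ∀ m, FP m → Prop} {k n : ℕ}

lemma glue_comap (hQ : IsSplittable Q) {j : Fin n} {π : FP (n+1)} (hπ : Q _ π)
    (hc : firstBlockEnd π = j.castSucc) :
    glue j (comap π (lowEmb j)) (comap π (highEmb j)) = π :=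
  BBP.glue_comap fun x y =>
    hQ.not_sameBlock hπ (hc ▸ lowEmb_le x) (hc ▸ castSucc_lt_highEmb y)

lemma sum_firstBlockEnd_eq_castSucc (hQ : IsSplittable Q) (j : Fin n) (s : NCSeries k)
    (w : Fin (n+1) → Fin k) :
    ∑ π ∈ univ.filter (fun π => Q _ π ∧ firstBlockEnd π = j.castSucc), genCoeff s w π =
      genCoeffSum (fun π₁ => Q _ π₁ ∧ Ll π₁ (fullPart j)) s (w ∘ lowEmb j) *
        genCoeffSum (Q _) s (w ∘ highEmb j) := by
  rw [genCoeffSum, genCoeffSum, sum_mul_sum, ← sum_product']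
  refine sum_nbij' (fun π => (comap π (lowEmb j), comap π (highEmb j)))
    (fun p => glue j p.1 p.2) ?_ ?_ ?_ ?_ ?_
  · intro π hπ
    simp only [mem_product, mem_filter, mem_univ, true_and] at hπ ⊢
    refine ⟨⟨hQ.comap_mem _ hπ.1, (firstBlockEnd_glue (π₂ := comap π (highEmb j))).mp ?_⟩,
      hQ.comap_mem _ hπ.1⟩
    rw [hQ.glue_comap hπ.1 hπ.2]
    exact hπ.2
  · rintro ⟨π₁, π₂⟩ hp
    simp only [mem_product, mem_filter, mem_univ, true_and] at hp ⊢
    exact ⟨hQ.glue_mem hp.1.1 hp.2, firstBlockEnd_glue.mpr hp.1.2⟩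
  · intro π hπ
    simp only [mem_filter, mem_univ, true_and] at hπ
    exact hQ.glue_comap hπ.1 hπ.2
  · rintro ⟨π₁, π₂⟩ -
    exact Prod.ext comap_glue_lowEmb comap_glue_highEmb
  · intro π hπ
    simp only [mem_filter, mem_univ, true_and] at hπ
    rw [← genCoeff_glue, hQ.glue_comap hπ.1 hπ.2]

lemma genCoeffSum_eq (hQ : IsSplittable Q) (s : NCSeries k) (w : Fin (n+1) → Fin k) :
    genCoeffSum (Q _) s w =
      ∑ j : Fin n, genCoeffSum (fun π₁ => Q _ π₁ ∧ Ll π₁ (fullPart j)) s (w ∘ lowEmb j) *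
          genCoeffSum (Q _) s (w ∘ highEmb j) +
        genCoeffSum (fun π => Q _ π ∧ Ll π (fullPart n)) s w := by
  rw [genCoeffSum, ← sum_fiberwise _ firstBlockEnd, Fin.sum_univ_castSucc]
  simp only [filter_filter]
  congr 1
  · exact sum_congr rfl fun j _ => hQ.sum_firstBlockEnd_eq_castSucc j s w
  · simp only [genCoeffSum, firstBlockEnd_eq_last_iff]
    congr

end IsSplittable

lemma isIntervalPartition_and_ll_iff {m : ℕ} {π : FP (m+1)} :
    IsIntervalPartition π ∧ Ll π (fullPart m) ↔ π = fullPart m := by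
  constructor
  · rintro ⟨hπ, hll⟩
    have h0 : ∀ u, SameBlock π 0 u := fun u => isIntervalPartition_iff.mp hπ 0 u _
      (Fin.zero_le u) (Fin.le_last u) (ll_fullPart_iff.mp hll)
    exact ext_of_sameBlock fun u v =>
      iff_of_true ((h0 u).symm.trans (h0 v)) (sameBlock_fullPart u v)
  · rintro rfl
    exact ⟨isIntervalPartition_iff.mpr fun x y _ _ _ _ => sameBlock_fullPart x y,
      ll_fullPart_iff.mpr (sameBlock_fullPart _ _)⟩

lemma genCoeffSum_isIntervalPartition_and_ll {k m : ℕ} (s : NCSeries k)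
    (w : Fin (m+1) → Fin k) :
    genCoeffSum (fun π => IsIntervalPartition π ∧ Ll π (fullPart m)) s w = s m w := by
  simp only [genCoeffSum, isIntervalPartition_and_ll_iff, filter_eq', mem_univ, if_true,
    sum_singleton, genCoeff_fullPart]

variable {k n : ℕ} {μ : Dist k}

lemma IsEtaSeries.momentSeries_eq_genCoeffSum {g : NCSeries k} (hg : IsEtaSeries μ g)
    (w : Fin (n+1) → Fin k) : momentSeries μ n w = genCoeffSum IsIntervalPartition g w :=
  (hg n w).trans (sum_filter _ _).symm

lemma IsRTransform.momentSeries_eq_genCoeffSum {f : NCSeries k} (hf : IsRTransform μ f)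
    (w : Fin (n+1) → Fin k) : momentSeries μ n w = genCoeffSum IsNC f w :=
  (hf n w).trans (sum_filter _ _).symm

lemma IsEtaSeries.momentSeries_eq {g : NCSeries k} (hg : IsEtaSeries μ g)
    (w : Fin (n+1) → Fin k) :
    momentSeries μ n w = ∑ j : Fin n,
      g j (w ∘ lowEmb j) * momentSeries μ (n-1-j) (w ∘ highEmb j) + g n w := by
  have h := isSplittable_isIntervalPartition.genCoeffSum_eq g w
  simpa only [genCoeffSum_isIntervalPartition_and_ll, ← hg.momentSeries_eq_genCoeffSum] using h

lemma IsRTransform.momentSeries_eq {f : NCSeries k} (hf : IsRTransform μ f)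
    (w : Fin (n+1) → Fin k) :
    momentSeries μ n w = ∑ j : Fin n,
      genCoeffSum (fun π => IsNC π ∧ Ll π (fullPart j)) f (w ∘ lowEmb j) *
        momentSeries μ (n-1-j) (w ∘ highEmb j) +
      genCoeffSum (fun π => IsNC π ∧ Ll π (fullPart n)) f w := by
  have h := isSplittable_isNC.genCoeffSum_eq f w
  simpa only [← hf.momentSeries_eq_genCoeffSum] using h

theorem statement4_general (k : ℕ) (μ : Dist k)
    (f g : NCSeries k) (hf : IsRTransform μ f) (hg : IsEtaSeries μ g)
    (n : ℕ) (w : Fin (n+1) → Fin k) :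
    g n w = ∑ π : FP (n+1),
      if IsNC π ∧ Ll π (fullPart n) then genCoeff f w π else 0 := by
  suffices h : ∀ n (w : Fin (n+1) → Fin k),
      g n w = genCoeffSum (fun π => IsNC π ∧ Ll π (fullPart n)) f w from
    (h n w).trans (by rw [genCoeffSum, sum_filter]; congr! 2)
  intro n
  induction n using Nat.strong_induction_on with
  | _ n ih =>
    intro w
    have h := (hg.momentSeries_eq w).symm.trans (hf.momentSeries_eq w)
    simp only [← ih _ (Fin.is_lt _)] at h
    exact add_left_cancel h

/-- Proposition 3.9.1: if `f = R_μ` and `g = η_μ`, then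
`Cf_w(g) = Σ_{π ∈ NC(n), π ≪ 1_n} Cf_{w;π}(f)`. -/
theorem statement4 (k : ℕ) (hk : 0 < k) (μ : Dist k) (hμ : IsDalg μ)
    (f g : NCSeries k) (hf : IsRTransform μ f) (hg : IsEtaSeries μ g)
    (n : ℕ) (w : Fin (n+1) → Fin k) :
    g n w = ∑ π : FP (n+1),
      if IsNC π ∧ Ll π (fullPart n) then genCoeff f w π else 0 :=
  statement4_general k μ f g hf hg n w

end BBP
end

section
/- Let k be a positive integer, let f and (f_N)_{N=1}^∞ be series in ℂ₀⟨⟨z₁,…,z_k⟩⟩ such that (f_N) converges coefficientwise to f, and let (t_N)_{N=1}^∞ be a sequence in (0, ∞) with t_N → ∞. For every N ≥ 1 put g_N := t_N · Reta((1/t_N) f_N) and h_N := t_N · Reta⁻¹((1/t_N) f_N). Then (g_N) converges coefficientwise to f and (h_N) converges coefficientwise to f. -/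
open Finset

attribute [local instance] Classical.propDecidable

open scoped ComplexOrder

namespace BBP

section Aux

open Filter Topology

lemma parts_fullPart (n : ℕ) : (fullPart n).parts = {(Finset.univ : Finset (Fin (n+1)))} := by
  simp [fullPart]

lemma partCoeff_eq_of_card {k n m : ℕ} (f : NCSeries k) (w : Fin (n+1) → Fin k)
    (B : Finset (Fin (n+1))) (hc : B.card = m + 1) :
    partCoeff f w B = f m (fun j => w ((B.orderIsoOfFin hc j).1)) := by
  have h : B.Nonempty := Finset.card_pos.mp (by omega)
  rw [partCoeff, dif_pos h]
  have hm : m = B.card - 1 := by omega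
  subst hm
  rfl

lemma partCoeff_full {k n : ℕ} (f : NCSeries k) (w : Fin (n+1) → Fin k) :
    partCoeff f w (Finset.univ : Finset (Fin (n+1))) = f n w := by
  have hc : (Finset.univ : Finset (Fin (n+1))).card = n + 1 := by simp
  rw [partCoeff_eq_of_card f w _ hc]
  congr 1
  funext j
  have hid : (id : Fin (n+1) → Fin (n+1)) =
      (Finset.univ : Finset (Fin (n+1))).orderEmbOfFin hc := by
    refine Finset.orderEmbOfFin_unique hc (fun i => Finset.mem_univ _) strictMono_id
  have := Finset.coe_orderIsoOfFin_apply (Finset.univ : Finset (Fin (n+1))) hc j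
  rw [this, ← congrFun hid j]
  rfl

lemma genCoeff_full {k n : ℕ} (f : NCSeries k) (w : Fin (n+1) → Fin k) :
    genCoeff f w (fullPart n) = f n w := by
  rw [genCoeff, parts_fullPart, Finset.prod_singleton, partCoeff_full]

lemma isNC_fullPart (n : ℕ) : IsNC (fullPart n) := by
  intro i j k l _ _ _ _ _
  exact ⟨Finset.univ, by simp [parts_fullPart], Finset.mem_univ _, Finset.mem_univ _⟩

lemma isInterval_fullPart (n : ℕ) : IsIntervalPartition (fullPart n) := by
  intro B hB x hx z hz y hxy hyz
  rw [parts_fullPart, Finset.mem_singleton] at hB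
  subst hB; exact Finset.mem_univ _

lemma two_le_parts_card {n : ℕ} (π : FP (n+1)) (hπ : π ≠ fullPart n) :
    2 ≤ π.parts.card := by
  by_contra h
  push_neg at h
  have hne : (Finset.univ : Finset (Fin (n+1))) ≠ (⊥ : Finset (Fin (n+1))) := by
    simpa using (Finset.univ_nonempty (α := Fin (n+1))).ne_empty
  have hnonempty := Finpartition.parts_nonempty π hne
  interval_cases hcard : π.parts.card
  · rw [Finset.card_eq_zero.mp hcard] at hnonempty
    exact absurd hnonempty (by simp)
  · obtain ⟨B, hB⟩ := Finset.card_eq_one.mp hcard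
    have hsup := π.sup_parts
    rw [hB, Finset.sup_singleton, id_eq] at hsup
    exact hπ (Finpartition.ext (by rw [parts_fullPart, hB, hsup]))

lemma block_card_lt {n : ℕ} (π : FP (n+1)) (hπ : π ≠ fullPart n)
    {B : Finset (Fin (n+1))} (hB : B ∈ π.parts) : B.card < n + 1 := by
  obtain ⟨C, hC, hCB⟩ := Finset.exists_mem_ne
    (lt_of_lt_of_le one_lt_two (two_le_parts_card π hπ)) B
  obtain ⟨c, hc⟩ := π.nonempty_of_mem_parts hC
  have hdisj : Disjoint C B := π.disjoint hC hB hCB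
  have hcB : c ∉ B := fun h => (Finset.disjoint_left.mp hdisj hc) h
  have : B ≠ Finset.univ := fun h => hcB (h ▸ Finset.mem_univ c)
  calc B.card < (Finset.univ : Finset (Fin (n+1))).card :=
        Finset.card_lt_card (Finset.ssubset_univ_iff.mpr this)
    _ = n + 1 := by simp

/-- key per-partition vanishing lemma -/
lemma tendsto_t_genCoeff_zero {k n : ℕ} (f : NCSeries k)
    (t : ℕ → ℝ) (ht : ∀ N, 0 < t N)
    (htlim : Filter.Tendsto t Filter.atTop Filter.atTop)
    (a : ℕ → NCSeries k) (w : Fin (n+1) → Fin k) (π : FP (n+1)) (hπ : π ≠ fullPart n)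
    (hIH : ∀ m, m < n → ∀ w' : Fin (m+1) → Fin k,
      Filter.Tendsto (fun N => (t N : ℂ) * a N m w') Filter.atTop (nhds (f m w'))) :
    Filter.Tendsto (fun N => (t N : ℂ) * genCoeff (a N) w π) Filter.atTop (nhds 0) := by
  have hcard := two_le_parts_card π hπ
  have htne : ∀ N, (t N : ℂ) ≠ 0 := fun N => by
    exact_mod_cast Complex.ofReal_ne_zero.mpr (ne_of_gt (ht N))
  -- rewrite
  have hrew : ∀ N, (t N : ℂ) * genCoeff (a N) w π =
      ((t N : ℂ)⁻¹) ^ (π.parts.card - 1) *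
        ∏ B ∈ π.parts, ((t N : ℂ) * partCoeff (a N) w B) := by
    intro N
    rw [Finset.prod_mul_distrib, Finset.prod_const]
    rw [genCoeff]
    obtain ⟨d, hd⟩ : ∃ d, π.parts.card = d + 2 := ⟨π.parts.card - 2, by omega⟩
    rw [hd]
    have : ((t N : ℂ))⁻¹ ^ (d + 2 - 1) * ((t N : ℂ) ^ (d + 2)) = (t N : ℂ) := by
      have h1 : ((t N : ℂ))⁻¹ ^ (d + 1) * ((t N : ℂ) ^ (d + 1)) = 1 := by
        rw [← mul_pow, inv_mul_cancel₀ (htne N), one_pow]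
      show ((t N : ℂ))⁻¹ ^ (d + 1) * ((t N : ℂ) ^ (d + 2)) = (t N : ℂ)
      rw [pow_succ ((t N : ℂ)) (d + 1), ← mul_assoc, h1, one_mul]
    rw [← mul_assoc, this]
  rw [show (0 : ℂ) = 0 * ∏ B ∈ π.parts, partCoeff f w B by rw [zero_mul]]
  refine Filter.Tendsto.congr (fun N => (hrew N).symm) (Filter.Tendsto.mul ?_ ?_)
  · have h0 : Filter.Tendsto (fun N => ((t N : ℂ))⁻¹) Filter.atTop (nhds 0) := by
      have hr : Filter.Tendsto (fun N => (t N)⁻¹) Filter.atTop (nhds (0:ℝ)) :=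
        htlim.inv_tendsto_atTop
      have h2 := (Complex.continuous_ofReal.tendsto (0:ℝ)).comp hr
      rw [Complex.ofReal_zero] at h2
      exact Filter.Tendsto.congr (fun N => Complex.ofReal_inv (t N)) h2
    have := h0.pow (π.parts.card - 1)
    rwa [zero_pow (by omega : π.parts.card - 1 ≠ 0)] at this
  · refine tendsto_finset_prod _ (fun B hB => ?_)
    have hBne : B.Nonempty := π.nonempty_of_mem_parts hB
    have hc : B.card = (B.card - 1) + 1 := by
      have := Finset.card_pos.mpr hBne; omega
    have hlt : B.card - 1 < n := by
      have h1 := block_card_lt π hπ hB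
      have h2 := Finset.card_pos.mpr hBne
      omega
    have hIHB := hIH (B.card - 1) hlt (fun j => w ((B.orderIsoOfFin hc j).1))
    rw [partCoeff_eq_of_card f w B hc]
    exact Filter.Tendsto.congr
      (fun N => by rw [partCoeff_eq_of_card (a N) w B hc]) hIHB

/-- key convergence lemma, applied with (P,Q) = (Int,NC) and (NC,Int). -/
lemma key_conv {k : ℕ} (f : NCSeries k) (fseq : ℕ → NCSeries k)
    (hconv : ConvCoeffwise fseq f)
    (t : ℕ → ℝ) (ht : ∀ N, 0 < t N)
    (htlim : Filter.Tendsto t Filter.atTop Filter.atTop)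
    (a : ℕ → NCSeries k)
    (P Q : ∀ n : ℕ, FP (n+1) → Prop)
    (hPfull : ∀ n, P n (fullPart n)) (hQfull : ∀ n, Q n (fullPart n))
    (heq : ∀ N n (w : Fin (n+1) → Fin k),
      (∑ π : FP (n+1), if P n π then genCoeff (a N) w π else 0) =
      (∑ π : FP (n+1), if Q n π then
        genCoeff (fun m w => (1 / (t N : ℂ)) * fseq N m w) w π else 0)) :
    ConvCoeffwise (fun N n w => (t N : ℂ) * a N n w) f := by
  intro n
  induction n using Nat.strong_induction_on with
  | _ n ih =>
  intro w
  have htne : ∀ N, (t N : ℂ) ≠ 0 := fun N => by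
    exact_mod_cast Complex.ofReal_ne_zero.mpr (ne_of_gt (ht N))
  classical
  set S1 : ℕ → ℂ := fun N => ∑ π ∈ (Finset.univ.erase (fullPart n)),
    (if P n π then genCoeff (a N) w π else 0) with hS1
  set S2 : ℕ → ℂ := fun N => ∑ π ∈ (Finset.univ.erase (fullPart n)),
    (if Q n π then genCoeff (fun m w => (1 / (t N : ℂ)) * fseq N m w) w π else 0) with hS2
  have hsplit : ∀ N, a N n w + S1 N = (1 / (t N : ℂ)) * fseq N n w + S2 N := by
    intro N
    have h1 := Finset.add_sum_erase Finset.univ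
      (fun π : FP (n+1) => if P n π then genCoeff (a N) w π else 0)
      (Finset.mem_univ (fullPart n))
    have h2 := Finset.add_sum_erase Finset.univ
      (fun π : FP (n+1) => if Q n π then
        genCoeff (fun m w => (1 / (t N : ℂ)) * fseq N m w) w π else 0)
      (Finset.mem_univ (fullPart n))
    beta_reduce at h1 h2
    rw [if_pos (hPfull n), genCoeff_full] at h1
    rw [if_pos (hQfull n), genCoeff_full] at h2
    rw [hS1, hS2]
    rw [h1, h2]
    exact heq N n w
  have hmain : ∀ N, (t N : ℂ) * a N n w =
      fseq N n w + (t N : ℂ) * S2 N - (t N : ℂ) * S1 N := by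
    intro N
    have h1 : (t N : ℂ) * (1 / (t N : ℂ)) = 1 := by
      rw [mul_one_div, div_self (htne N)]
    linear_combination (t N : ℂ) * (hsplit N) + (fseq N n w) * h1
  refine Filter.Tendsto.congr (fun N => (hmain N).symm) ?_
  have hlim2 : Filter.Tendsto (fun N => (t N : ℂ) * S2 N) Filter.atTop (nhds 0) := by
    have : ∀ N, (t N : ℂ) * S2 N = ∑ π ∈ (Finset.univ.erase (fullPart n)),
        (if Q n π then (t N : ℂ) *
          genCoeff (fun m w => (1 / (t N : ℂ)) * fseq N m w) w π else 0) := by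
      intro N
      rw [hS2, Finset.mul_sum]
      exact Finset.sum_congr rfl (fun π _ => by rw [mul_ite, mul_zero])
    have hsum : Filter.Tendsto
        (fun N => ∑ π ∈ (Finset.univ.erase (fullPart n)),
          (if Q n π then (t N : ℂ) *
            genCoeff (fun m w => (1 / (t N : ℂ)) * fseq N m w) w π else 0))
        Filter.atTop (nhds (∑ _π ∈ (Finset.univ.erase (fullPart n)), (0:ℂ))) := by
      refine tendsto_finset_sum _ (fun π hπ => ?_)
      have hπne : π ≠ fullPart n := (Finset.mem_erase.mp hπ).1
      by_cases hQ : Q n π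
      · simp only [if_pos hQ]
        refine tendsto_t_genCoeff_zero f t ht htlim _ w π hπne (fun m _ w' => ?_)
        refine Filter.Tendsto.congr (fun N => ?_) (hconv m w')
        rw [← mul_assoc, mul_one_div, div_self (htne N), one_mul]
      · simp only [if_neg hQ]; exact tendsto_const_nhds
    have := Filter.Tendsto.congr (fun N => (this N).symm) hsum
    simpa using this
  have hlim1 : Filter.Tendsto (fun N => (t N : ℂ) * S1 N) Filter.atTop (nhds 0) := by
    have : ∀ N, (t N : ℂ) * S1 N = ∑ π ∈ (Finset.univ.erase (fullPart n)),
        (if P n π then (t N : ℂ) * genCoeff (a N) w π else 0) := by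
      intro N
      rw [hS1, Finset.mul_sum]
      exact Finset.sum_congr rfl (fun π _ => by rw [mul_ite, mul_zero])
    have hsum : Filter.Tendsto
        (fun N => ∑ π ∈ (Finset.univ.erase (fullPart n)),
          (if P n π then (t N : ℂ) * genCoeff (a N) w π else 0))
        Filter.atTop (nhds (∑ _π ∈ (Finset.univ.erase (fullPart n)), (0:ℂ))) := by
      refine tendsto_finset_sum _ (fun π hπ => ?_)
      have hπne : π ≠ fullPart n := (Finset.mem_erase.mp hπ).1
      by_cases hP : P n π
      · simp only [if_pos hP]
        exact tendsto_t_genCoeff_zero f t ht htlim a w π hπne (fun m hm w' => ih m hm w')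
      · simp only [if_neg hP]; exact tendsto_const_nhds
    have := Filter.Tendsto.congr (fun N => (this N).symm) hsum
    simpa using this
  have := ((hconv n w).add hlim2).sub hlim1
  simpa using this

end Aux

/-- Lemma 5.4: if `f_N → f` coefficientwise and `t_N → ∞` in `(0,∞)`,
then `g_N := t_N · Reta((1/t_N) f_N) → f` and `h_N := t_N · Reta⁻¹((1/t_N) f_N) → f`
coefficientwise.  (Here `u N = Reta((1/t_N) f_N)` and `v N = Reta⁻¹((1/t_N) f_N)`.) -/
theorem statement9 (k : ℕ) (hk : 0 < k) (f : NCSeries k) (fseq : ℕ → NCSeries k)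
    (hconv : ConvCoeffwise fseq f)
    (t : ℕ → ℝ) (ht : ∀ N, 0 < t N)
    (htlim : Filter.Tendsto t Filter.atTop Filter.atTop)
    (u v : ℕ → NCSeries k)
    (hu : ∀ N, RetaRel (fun n w => (1 / (t N : ℂ)) * fseq N n w) (u N))
    (hv : ∀ N, RetaRel (v N) (fun n w => (1 / (t N : ℂ)) * fseq N n w)) :
    ConvCoeffwise (fun N n w => (t N : ℂ) * u N n w) f ∧
    ConvCoeffwise (fun N n w => (t N : ℂ) * v N n w) f := by
  constructor
  · refine key_conv f fseq hconv t ht htlim u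
      (fun n π => IsIntervalPartition π) (fun n π => IsNC π)
      (fun n => isInterval_fullPart n) (fun n => isNC_fullPart n) ?_
    intro N n w
    obtain ⟨μ, _, hR, hE⟩ := hu N
    rw [← hE n w, ← hR n w]
  · refine key_conv f fseq hconv t ht htlim v
      (fun n π => IsNC π) (fun n π => IsIntervalPartition π)
      (fun n => isNC_fullPart n) (fun n => isInterval_fullPart n) ?_
    intro N n w
    obtain ⟨μ, _, hR, hE⟩ := hv N
    rw [← hR n w, ← hE n w]
end BBP
end
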